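/- arXiv:1503.08556 — 8 statements merged into one kernel-verified Lean document; each statement's English description precedes it below -/
import Mathlib

section
/- If a graph G has a {P2,P5}-factor, then for every subset X of V(G), c1(G−X) + (1/2)·c3(G−X) ≤ (3/2)·|X|, where c_i(H) denotes the number of components of H with exactly i vertices. -/
open SimpleGraph

/-- `cCount H i` is the number of connected components of `H` with exactly `i` vertices. -/
noncomputable def cCount {V : Type*} (H : SimpleGraph V) (i : ℕ) : ℕ :=
  Nat.card {c : H.ConnectedComponent // Nat.card c.supp = i}

/-- The component `c` of `F` is (induces) a path of order `n`. -/
def IsPathComp {V : Type*} (F : SimpleGraph V) (n : ℕ) (c : F.ConnectedComponent) : Prop :=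
  Nonempty ((SimpleGraph.induce c.supp F) ≃g SimpleGraph.pathGraph n)

/-- `G` has a spanning subgraph each of whose components is a path of order in `ns`. -/
def HasPathFamilyFactor {V : Type*} (G : SimpleGraph V) (ns : Set ℕ) : Prop :=
  ∃ F ≤ G, ∀ c : F.ConnectedComponent, ∃ n ∈ ns, IsPathComp F n c

/-- `F` is a path-factor of `G`: a spanning subgraph each of whose components is a
path of order at least `2`. -/
def IsPathFactor {V : Type*} (G F : SimpleGraph V) : Prop :=
  F ≤ G ∧ ∀ c : F.ConnectedComponent, ∃ n, 2 ≤ n ∧ IsPathComp F n c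

/-- The neighbourhood `N_G(X)`: vertices outside `X` adjacent to some vertex of `X`. -/
def nbhd {V : Type*} (G : SimpleGraph V) (X : Set V) : Set V :=
  {v | v ∉ X ∧ ∃ u ∈ X, G.Adj u v}

/-!
Fix a `{P₂, P₅}`-factor `F` of `G` and let every `F`-edge `vx` with `v ∉ X`, `x ∈ X` carry the
weight `3 - deg_F v`, which is `2 / deg_F v` because `deg_F v ∈ {1, 2}`. A vertex `x ∈ X` receives
at most `3`: in `P₂` and `P₅` no vertex has two end-vertices as neighbours. An isolated vertex of
`G - X` has all its `F`-edges going into `X`, so it sends exactly `2`. A component of `G - X` with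
three vertices cannot be a union of `F`-components (`3` is not a sum of `2`s and `5`s), so some
`F`-edge leaves it into `X` and it sends at least `1`. Hence `2 c₁ + c₃ ≤ 3 |X|`.
-/

open SimpleGraph Finset

namespace SimpleGraph

variable {V W : Type*} {G F : SimpleGraph V}

theorem Iso.sum_neighborFinset_degree {H : SimpleGraph W} [LocallyFinite G] [LocallyFinite H]
    (e : G ≃g H) (g : ℕ → ℕ) (v : V) :
    ∑ w ∈ H.neighborFinset (e v), g (H.degree w) = ∑ w ∈ G.neighborFinset v, g (G.degree w) := by
  classical
  have : H.neighborFinset (e v) = (G.neighborFinset v).map e.toEquiv.toEmbedding := by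
    ext w
    obtain ⟨w, rfl⟩ := e.surjective w
    simp [-mem_map_equiv, e.map_adj_iff]
  simp [this]

theorem ConnectedComponent.sum_neighborFinset_degree_induce_supp [Fintype V] [DecidableRel F.Adj]
    (c : F.ConnectedComponent) [DecidablePred (· ∈ c.supp)] (g : ℕ → ℕ) (v : c.supp) :
    ∑ w ∈ (F.induce c.supp).neighborFinset v, g ((F.induce c.supp).degree w) =
      ∑ w ∈ F.neighborFinset v, g (F.degree w) := by
  have hsub (w : c.supp) : F.neighborSet w ⊆ c.supp := fun _ h => c.mem_supp_of_adj_mem_supp w.2 h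
  rw [← map_neighborFinset_induce_of_neighborSet_subset (hsub v), sum_map]
  exact sum_congr rfl fun w _ => by rw [degree_induce_of_neighborSet_subset (hsub w)]; rfl

theorem ConnectedComponent.supp_subset_of_forall_adj_mem {S : Set V}
    (hS : ∀ ⦃v w⦄, v ∈ S → F.Adj v w → w ∈ S) {v : V} (hv : v ∈ S) :
    (F.connectedComponentMk v).supp ⊆ S := by
  intro w hw
  have hvw := (reachable_iff_reflTransGen v w).mp (ConnectedComponent.exact hw).symm
  clear hw
  induction hvw with
  | refl => exact hv
  | tail _ hadj ih => exact hS ih hadj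

theorem ncard_ne_three_of_forall_adj_mem [Finite V] (hadj : ∀ v, ∃ w, F.Adj v w)
    (h3 : ∀ c : F.ConnectedComponent, c.supp.ncard ≠ 3) {S : Set V}
    (hS : ∀ ⦃v w⦄, v ∈ S → F.Adj v w → w ∈ S) : S.ncard ≠ 3 := by
  intro hS3
  obtain ⟨v, hv⟩ := Set.nonempty_of_ncard_ne_zero (by omega : S.ncard ≠ 0)
  set K := (F.connectedComponentMk v).supp
  have hKS : K ⊆ S := ConnectedComponent.supp_subset_of_forall_adj_mem hS hv
  have hK : K.ncard = 2 := by
    obtain ⟨w, hvw⟩ := hadj v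
    have hwK : w ∈ K := (ConnectedComponent.connectedComponentMk_eq_of_adj hvw).symm
    have hvwK : {v, w} ⊆ K := Set.insert_subset_iff.mpr ⟨rfl, Set.singleton_subset_iff.mpr hwK⟩
    have h2 : 2 ≤ K.ncard := (Set.ncard_pair hvw.ne).symm.trans_le (Set.ncard_le_ncard hvwK)
    have hne3 : K.ncard ≠ 3 := h3 _
    have hle3 := Set.ncard_le_ncard hKS
    omega
  obtain ⟨u, hu⟩ : ∃ u, S \ K = {u} := by
    rw [← Set.ncard_eq_one]
    have := Set.ncard_sdiff_add_ncard_of_subset hKS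
    omega
  obtain ⟨w, huw⟩ := hadj u
  have hu' : u ∈ S \ K := hu ▸ rfl
  have hw : w ∈ S \ K := ⟨hS hu'.1 huw, fun hwK =>
    hu'.2 ((ConnectedComponent.connectedComponentMk_eq_of_adj huw).trans hwK)⟩
  rw [hu] at hw
  exact huw.ne hw.symm

variable {X : Set V}

theorem ConnectedComponent.mem_supp_of_adj_of_le (hFG : F ≤ G)
    {C : (G.induce Xᶜ).ConnectedComponent} {u : ↥Xᶜ} (hu : u ∈ C.supp) {w : V}
    (huw : F.Adj u w) (hw : w ∉ X) : ⟨w, hw⟩ ∈ C.supp :=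
  C.mem_supp_of_adj_mem_supp hu (hFG huw)

theorem ConnectedComponent.exists_forall_adj_mem_of_nat_card_supp_eq_one (hFG : F ≤ G)
    {C : (G.induce Xᶜ).ConnectedComponent} (hC : Nat.card C.supp = 1) :
    ∃ u ∈ C.supp, ∀ w, F.Adj u w → w ∈ X := by
  obtain ⟨u, hu⟩ := Set.ncard_eq_one.mp ((Nat.card_coe_set_eq _).symm.trans hC)
  have huC : u ∈ C.supp := by rw [hu]; rfl
  refine ⟨u, huC, fun w huw => by_contra fun hw => huw.ne ?_⟩
  have hwC := C.mem_supp_of_adj_of_le hFG huC huw hw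
  rw [hu] at hwC
  exact congrArg Subtype.val hwC.symm

theorem ConnectedComponent.exists_adj_mem_of_nat_card_supp_eq_three [Finite V] (hFG : F ≤ G)
    (hadj : ∀ v, ∃ w, F.Adj v w) (h3 : ∀ c : F.ConnectedComponent, c.supp.ncard ≠ 3)
    {C : (G.induce Xᶜ).ConnectedComponent} (hC : Nat.card C.supp = 3) :
    ∃ u ∈ C.supp, ∃ x ∈ X, F.Adj u x := by
  by_contra! hno
  refine ncard_ne_three_of_forall_adj_mem hadj h3 (S := Subtype.val '' C.supp) ?_ ?_
  · rintro _ w ⟨u, hu, rfl⟩ huw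
    have hw : w ∉ X := fun hw => hno u hu w hw huw
    exact ⟨⟨w, hw⟩, C.mem_supp_of_adj_of_le hFG hu huw hw, rfl⟩
  · rw [Set.ncard_image_of_injective _ Subtype.val_injective, ← Nat.card_coe_set_eq, hC]

section Weight

def sentWeight [Fintype V] (F : SimpleGraph V) [DecidableRel F.Adj] (X : Set V)
    [DecidablePred (· ∈ X)] (v : V) : ℕ :=
  #{x ∈ F.neighborFinset v | x ∈ X} * (3 - F.degree v)

variable [Fintype V] [DecidableRel F.Adj] [DecidablePred (· ∈ X)] {v x : V}

theorem sentWeight_eq_two (hdeg : F.degree v = 1 ∨ F.degree v = 2)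
    (hX : ∀ w, F.Adj v w → w ∈ X) : sentWeight F X v = 2 := by
  have : {x ∈ F.neighborFinset v | x ∈ X} = F.neighborFinset v :=
    filter_true_of_mem fun w hw => hX w ((mem_neighborFinset _ _ _).mp hw)
  rw [sentWeight, this, card_neighborFinset_eq_degree]
  rcases hdeg with h | h <;> rw [h]

theorem one_le_sentWeight (hdeg : F.degree v ≤ 2) (hx : x ∈ X) (hvx : F.Adj v x) :
    1 ≤ sentWeight F X v := by
  have : 0 < #{x ∈ F.neighborFinset v | x ∈ X} :=
    card_pos.mpr ⟨x, mem_filter.mpr ⟨(mem_neighborFinset _ _ _).mpr hvx, hx⟩⟩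
  exact Nat.one_le_iff_ne_zero.mpr (Nat.mul_ne_zero (by omega) (by omega))

theorem sum_sentWeight_le (hsum : ∀ x, ∑ w ∈ F.neighborFinset x, (3 - F.degree w) ≤ 3) :
    ∑ v with v ∉ X, sentWeight F X v ≤ 3 * #{x | x ∈ X} := by
  calc ∑ v with v ∉ X, sentWeight F X v
      = ∑ v with v ∉ X, ∑ x ∈ F.neighborFinset v with x ∈ X, (3 - F.degree v) := by
        simp [sentWeight]
    _ = ∑ x with x ∈ X, ∑ v ∈ F.neighborFinset x with v ∉ X, (3 - F.degree v) :=
        sum_comm' fun v x => by simp [adj_comm, and_comm, and_left_comm]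
    _ ≤ ∑ x with x ∈ X, ∑ v ∈ F.neighborFinset x, (3 - F.degree v) :=
        sum_le_sum fun x _ => sum_le_sum_of_subset (filter_subset _ _)
    _ ≤ ∑ x with x ∈ X, 3 := sum_le_sum fun x _ => hsum x
    _ = 3 * #{x | x ∈ X} := by rw [sum_const, smul_eq_mul, mul_comm]

theorem two_mul_cCount_one_add_cCount_three_le_sum_sentWeight (hFG : F ≤ G)
    (hdeg : ∀ v, F.degree v = 1 ∨ F.degree v = 2)
    (h3 : ∀ c : F.ConnectedComponent, c.supp.ncard ≠ 3) :
    2 * cCount (G.induce Xᶜ) 1 + cCount (G.induce Xᶜ) 3 ≤ ∑ v with v ∉ X, sentWeight F X v := by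
  classical
  have hadj (v : V) : ∃ w, F.Adj v w :=
    (F.degree_pos_iff_exists_adj v).mp (by have := hdeg v; omega)
  rw [sum_subtype _ (p := (· ∈ Xᶜ)) (fun v => by simp),
    ← sum_fiberwise univ (G.induce Xᶜ).connectedComponentMk]
  calc 2 * cCount (G.induce Xᶜ) 1 + cCount (G.induce Xᶜ) 3
      = ∑ C : (G.induce Xᶜ).ConnectedComponent,
          (2 * (if Nat.card C.supp = 1 then 1 else 0) + if Nat.card C.supp = 3 then 1 else 0) := by
        simp only [sum_add_distrib, ← mul_sum, sum_boole, cCount, Nat.card_eq_fintype_card,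
          Fintype.card_subtype, Nat.cast_id]
    _ ≤ _ := by
      refine sum_le_sum fun C _ => ?_
      have hle {u : ↥Xᶜ} (hu : u ∈ C.supp) :
          sentWeight F X u ≤ ∑ u with (G.induce Xᶜ).connectedComponentMk u = C, sentWeight F X u :=
        single_le_sum (f := fun u : ↥Xᶜ => sentWeight F X u) (fun _ _ => Nat.zero_le _)
          (mem_filter.mpr ⟨mem_univ _, (C.mem_supp_iff u).mp hu⟩)
      by_cases h1 : Nat.card C.supp = 1
      · obtain ⟨u, hu, hX⟩ := C.exists_forall_adj_mem_of_nat_card_supp_eq_one hFG h1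
        rw [if_pos h1, if_neg (by omega)]
        exact (sentWeight_eq_two (hdeg u) hX).symm.trans_le (hle hu)
      by_cases hC3 : Nat.card C.supp = 3
      · obtain ⟨u, hu, x, hx, hux⟩ := C.exists_adj_mem_of_nat_card_supp_eq_three hFG hadj h3 hC3
        rw [if_neg h1, if_pos hC3]
        exact (one_le_sentWeight (by have := hdeg u; omega) hx hux).trans (hle hu)
      · rw [if_neg h1, if_neg hC3]
        exact Nat.zero_le _

end Weight

theorem two_mul_cCount_one_add_cCount_three_le [Fintype V] [DecidableRel F.Adj] (hFG : F ≤ G)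
    (hdeg : ∀ v, F.degree v = 1 ∨ F.degree v = 2)
    (hsum : ∀ v, ∑ w ∈ F.neighborFinset v, (3 - F.degree w) ≤ 3)
    (h3 : ∀ c : F.ConnectedComponent, c.supp.ncard ≠ 3) (X : Set V) :
    2 * cCount (G.induce Xᶜ) 1 + cCount (G.induce Xᶜ) 3 ≤ 3 * X.ncard := by
  classical
  calc _ ≤ ∑ v with v ∉ X, sentWeight F X v :=
        two_mul_cCount_one_add_cCount_three_le_sum_sentWeight hFG hdeg h3
    _ ≤ 3 * #{x | x ∈ X} := sum_sentWeight_le hsum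
    _ = 3 * X.ncard := by simp [Set.ncard_eq_toFinset_card']

instance (n : ℕ) : DecidableRel (pathGraph n).Adj := fun _ _ => decidable_of_iff' _ pathGraph_adj

theorem pathGraph_degree_and_sum_le_three {n : ℕ} (hn : n = 2 ∨ n = 5) (i : Fin n) :
    ((pathGraph n).degree i = 1 ∨ (pathGraph n).degree i = 2) ∧
      ∑ j ∈ (pathGraph n).neighborFinset i, (3 - (pathGraph n).degree j) ≤ 3 := by
  rcases hn with rfl | rfl <;> revert i <;> decide

theorem _root_.IsPathComp.nat_card_supp {n : ℕ} {c : F.ConnectedComponent}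
    (hc : IsPathComp F n c) : Nat.card c.supp = n := by
  obtain ⟨e⟩ := hc
  simpa using Nat.card_congr e.toEquiv

theorem _root_.IsPathComp.exists_sum_neighborFinset_degree_eq [Fintype V] [DecidableRel F.Adj]
    {n : ℕ} {c : F.ConnectedComponent}
    (hc : IsPathComp F n c) {v : V} (hv : v ∈ c.supp) :
    ∃ i : Fin n, ∀ g : ℕ → ℕ, ∑ w ∈ F.neighborFinset v, g (F.degree w) =
      ∑ j ∈ (pathGraph n).neighborFinset i, g ((pathGraph n).degree j) := by
  classical
  obtain ⟨e⟩ := hc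
  exact ⟨e ⟨v, hv⟩, fun g => by
    rw [e.sum_neighborFinset_degree, c.sum_neighborFinset_degree_induce_supp]⟩

theorem degree_and_sum_le_three_of_forall_isPathComp [Fintype V] [DecidableRel F.Adj]
    (hF : ∀ c : F.ConnectedComponent, ∃ n ∈ ({2, 5} : Set ℕ), IsPathComp F n c) (v : V) :
    (F.degree v = 1 ∨ F.degree v = 2) ∧ ∑ w ∈ F.neighborFinset v, (3 - F.degree w) ≤ 3 := by
  obtain ⟨n, hn, hc⟩ := hF (F.connectedComponentMk v)
  obtain ⟨i, hi⟩ := hc.exists_sum_neighborFinset_degree_eq rfl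
  have hdeg := hi fun _ => 1
  simp only [← card_eq_sum_ones, card_neighborFinset_eq_degree] at hdeg
  rw [hdeg, hi]
  exact pathGraph_degree_and_sum_le_three hn i

end SimpleGraph

/-- a necessary condition for a `{P₂, P₅}`-factor. -/
theorem stmt2 {V : Type*} [Fintype V] (G : SimpleGraph V)
    (h : HasPathFamilyFactor G {2, 5}) (X : Set V) :
    (cCount (SimpleGraph.induce Xᶜ G) 1 : ℚ) + (1 / 2) * cCount (SimpleGraph.induce Xᶜ G) 3 ≤
      (3 / 2) * X.ncard := by
  classical
  obtain ⟨F, hFG, hF⟩ := h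
  have hloc := degree_and_sum_le_three_of_forall_isPathComp hF
  have h3 (c : F.ConnectedComponent) : c.supp.ncard ≠ 3 := by
    obtain ⟨n, hn, hc⟩ := hF c
    rw [← Nat.card_coe_set_eq, hc.nat_card_supp]
    rcases hn with rfl | rfl <;> decide
  have hcount := two_mul_cCount_one_add_cCount_three_le hFG (fun v => (hloc v).1)
    (fun v => (hloc v).2) h3 X
  have : (2 * cCount (G.induce Xᶜ) 1 + cCount (G.induce Xᶜ) 3 : ℚ) ≤ 3 * X.ncard := by
    exact_mod_cast hcount
  linarith
end

section
/- For every n ≥ 1, let H_n be the graph obtained from the disjoint union of a path Q0 of order 3 and n disjoint paths Q1, …, Qn each of order 7, by joining an endvertex a of Q0 to the center b_i (the 4th vertex) of each Q_i. Then H_n has no {P2,P5}-factor. -/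
/-!
In a path factor `F` with no component of order `3`, a pendant path `x y z` of the host graph
(`x` a leaf, `y` of degree `2`) forces `z` to have an `F`-neighbour outside `{x, y}`. Applied to
the arms `0 1 2` and `6 5 4` of each `Qᵢ`, this gives the center `bᵢ` both of its `F`-neighbours
inside `Qᵢ`, so `bᵢ` is not joined to `a` in `F`. But `Q₀`, read from its far end to `a`, is a
pendant path too, so `a` must be joined in `F` to some `bᵢ`.
-/

open SimpleGraph

/-- The graph `H_n`: a path `Q₀` of order `3` together with `n` disjoint paths of order
`7`, where the endvertex `0` of `Q₀` is joined to the center (4th vertex) of each `Qᵢ`. -/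
def Hgraph (n : ℕ) : SimpleGraph (Fin 3 ⊕ Fin n × Fin 7) :=
  SimpleGraph.fromRel (fun u v =>
    (∃ i j : Fin 3, u = Sum.inl i ∧ v = Sum.inl j ∧ (SimpleGraph.pathGraph 3).Adj i j) ∨
    (∃ k : Fin n, ∃ i j : Fin 7,
      u = Sum.inr (k, i) ∧ v = Sum.inr (k, j) ∧ (SimpleGraph.pathGraph 7).Adj i j) ∨
    (∃ k : Fin n, u = Sum.inl 0 ∧ v = Sum.inr (k, 3)))

namespace IsPathComp

variable {V : Type*} {F : SimpleGraph V} {n : ℕ} {c : F.ConnectedComponent}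

lemma card_supp (h : IsPathComp F n c) : Nat.card c.supp = n := by
  obtain ⟨e⟩ := h
  rw [Nat.card_congr e.toEquiv, Nat.card_eq_fintype_card, Fintype.card_fin]

lemma exists_adj (hn : 2 ≤ n) (h : IsPathComp F n c) {v : V} (hv : v ∈ c.supp) :
    ∃ u, F.Adj v u := by
  obtain ⟨e⟩ := h
  obtain ⟨u, hu⟩ : ∃ u : Fin n, (pathGraph n).Adj (e ⟨v, hv⟩) u := by
    set w := e ⟨v, hv⟩
    rcases lt_or_ge (w.val + 1) n with hw | hw
    · exact ⟨⟨w.val + 1, hw⟩, pathGraph_adj.mpr (Or.inl rfl)⟩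
    · exact ⟨⟨w.val - 1, by omega⟩, pathGraph_adj.mpr (Or.inr (by simp; omega))⟩
  refine ⟨e.symm u, ?_⟩
  simpa using e.symm.map_adj_iff.mpr hu

lemma eq_or_eq_or_eq_of_adj {v x y z : V} (h : IsPathComp F n (F.connectedComponentMk v))
    (hx : F.Adj v x) (hy : F.Adj v y) (hz : F.Adj v z) : x = y ∨ x = z ∨ y = z := by
  obtain ⟨e⟩ := h
  set S := (F.connectedComponentMk v).supp
  have mem {u : V} (hu : F.Adj v u) : u ∈ S := ConnectedComponent.sound hu.symm.reachable
  have image_adj {u : V} (hu : F.Adj v u) :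
      (pathGraph n).Adj (e ⟨v, rfl⟩) (e ⟨u, mem hu⟩) := e.map_adj_iff.mpr hu
  have val_inj {a b : V} (ha : a ∈ S) (hb : b ∈ S) (hab : (e ⟨a, ha⟩).val = (e ⟨b, hb⟩).val) :
      a = b := congrArg Subtype.val (e.injective (Fin.ext hab))
  have ax := image_adj hx
  have ay := image_adj hy
  have az := image_adj hz
  rw [pathGraph_adj] at ax ay az
  by_contra! hne
  have := mt (val_inj (mem hx) (mem hy)) hne.1
  have := mt (val_inj (mem hx) (mem hz)) hne.2.1
  have := mt (val_inj (mem hy) (mem hz)) hne.2.2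
  omega

end IsPathComp

section PendantPath

variable {V : Type*} {G F : SimpleGraph V} {ns : Set ℕ}

lemma card_supp_connectedComponentMk_eq_three {x y z : V} (hxy : x ≠ y) (hxz : x ≠ z)
    (hyz : y ≠ z) (axy : F.Adj x y) (ayz : F.Adj y z) (hx : ∀ w, F.Adj x w → w = y)
    (hy : ∀ w, F.Adj y w → w = x ∨ w = z) (hz : ∀ w, F.Adj z w → w = y) :
    Nat.card (F.connectedComponentMk x).supp = 3 := by
  have closed : ∀ {u v : V}, F.Walk u v → u ∈ ({x, y, z} : Set V) → v ∈ ({x, y, z} : Set V) := by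
    intro u v p
    induction p with
    | nil => exact id
    | cons h _ ih =>
      rintro (rfl | rfl | rfl)
      · exact ih (by simp [hx _ h])
      · rcases hy _ h with rfl | rfl <;> exact ih (by simp)
      · exact ih (by simp [hz _ h])
  have supp_eq : (F.connectedComponentMk x).supp = {x, y, z} := by
    ext w
    rw [ConnectedComponent.mem_supp_iff]
    constructor
    · intro h
      obtain ⟨p⟩ := ConnectedComponent.exact h
      exact closed p.reverse (by simp)
    · rintro (rfl | rfl | rfl)
      · rfl
      · exact ConnectedComponent.sound axy.symm.reachable
      · exact ConnectedComponent.sound (ayz.symm.reachable.trans axy.symm.reachable)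
  rw [supp_eq, Nat.card_coe_set_eq, Set.ncard_insert_of_notMem (by simp [hxy, hxz]),
    Set.ncard_pair hyz]

lemma exists_adj_ne_of_pendant (hF : ∀ c : F.ConnectedComponent, ∃ m ∈ ns, IsPathComp F m c)
    (hns : ∀ m ∈ ns, 2 ≤ m) (h3 : 3 ∉ ns) {x y z : V} (hxy : x ≠ y) (hxz : x ≠ z) (hyz : y ≠ z)
    (hx : ∀ w, F.Adj x w → w = y) (hy : ∀ w, F.Adj y w → w = x ∨ w = z) :
    ∃ w, F.Adj z w ∧ w ≠ y := by
  have exists_adj (v : V) : ∃ u, F.Adj v u := by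
    obtain ⟨m, hm, hp⟩ := hF (F.connectedComponentMk v)
    exact hp.exists_adj (hns m hm) rfl
  by_contra! hz
  obtain ⟨x', hx'⟩ := exists_adj x
  obtain ⟨z', hz'⟩ := exists_adj z
  have axy : F.Adj x y := hx _ hx' ▸ hx'
  have azy : F.Adj z y := hz _ hz' ▸ hz'
  obtain ⟨m, hm, hp⟩ := hF (F.connectedComponentMk x)
  have := card_supp_connectedComponentMk_eq_three hxy hxz hyz axy azy.symm hx hy hz
  exact h3 (this ▸ hp.card_supp ▸ hm)

lemma adj_of_pendant (hFG : F ≤ G)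
    (hF : ∀ c : F.ConnectedComponent, ∃ m ∈ ns, IsPathComp F m c)
    (hns : ∀ m ∈ ns, 2 ≤ m) (h3 : 3 ∉ ns) {x y z u : V} (hxy : x ≠ y) (hxz : x ≠ z) (hyz : y ≠ z)
    (hx : ∀ w, G.Adj x w → w = y) (hy : ∀ w, G.Adj y w → w = x ∨ w = z)
    (hz : ∀ w, G.Adj z w → w = y ∨ w = u) : F.Adj z u := by
  obtain ⟨w, hzw, hwy⟩ :=
    exists_adj_ne_of_pendant hF hns h3 hxy hxz hyz (fun w h => hx w (hFG h))
      (fun w h => hy w (hFG h))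
  exact (hz w (hFG hzw)).resolve_left hwy ▸ hzw

end PendantPath

section Hgraph

variable {n : ℕ}

@[simp]
lemma Hgraph_adj_inl_inl {i j : Fin 3} :
    (Hgraph n).Adj (.inl i) (.inl j) ↔ (pathGraph 3).Adj i j := by
  simp only [Hgraph, fromRel_adj, pathGraph_adj]
  grind

@[simp]
lemma Hgraph_adj_inr_inr {k l : Fin n} {i j : Fin 7} :
    (Hgraph n).Adj (.inr (k, i)) (.inr (l, j)) ↔ k = l ∧ (pathGraph 7).Adj i j := by
  simp only [Hgraph, fromRel_adj, pathGraph_adj]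
  grind

@[simp]
lemma Hgraph_adj_inl_inr {i : Fin 3} {k : Fin n} {j : Fin 7} :
    (Hgraph n).Adj (.inl i) (.inr (k, j)) ↔ i = 0 ∧ j = 3 := by
  simp [Hgraph, fromRel_adj]

@[simp]
lemma Hgraph_adj_inr_inl {i : Fin 3} {k : Fin n} {j : Fin 7} :
    (Hgraph n).Adj (.inr (k, j)) (.inl i) ↔ i = 0 ∧ j = 3 := by
  rw [adj_comm, Hgraph_adj_inl_inr]

variable {F : SimpleGraph (Fin 3 ⊕ Fin n × Fin 7)} {ns : Set ℕ}

lemma adj_center_of_le_Hgraph (hFG : F ≤ Hgraph n)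
    (hF : ∀ c : F.ConnectedComponent, ∃ m ∈ ns, IsPathComp F m c)
    (hns : ∀ m ∈ ns, 2 ≤ m) (h3 : 3 ∉ ns) (k : Fin n) :
    F.Adj (.inr (k, 2)) (.inr (k, 3)) ∧ F.Adj (.inr (k, 4)) (.inr (k, 3)) := by
  refine ⟨adj_of_pendant hFG hF hns h3 (x := .inr (k, 0)) (y := .inr (k, 1)) ?_ ?_ ?_ ?_ ?_ ?_,
    adj_of_pendant hFG hF hns h3 (x := .inr (k, 6)) (y := .inr (k, 5)) ?_ ?_ ?_ ?_ ?_ ?_⟩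
  all_goals first
    | (simp; done)
    | (rintro (i | ⟨l, j⟩) h
       · simp at h
       · simp only [Hgraph_adj_inr_inr, pathGraph_adj] at h
         obtain ⟨rfl, h⟩ := h
         simp only [Sum.inr.injEq, Prod.mk.injEq, true_and]
         omega)

theorem not_hasPathFamilyFactor_Hgraph (hns : ∀ m ∈ ns, 2 ≤ m) (h3 : 3 ∉ ns) :
    ¬ HasPathFamilyFactor (Hgraph n) ns := by
  rintro ⟨F, hFG, hF⟩
  have center_not_adj (k : Fin n) : ¬ F.Adj (.inr (k, 3)) (.inl 0) := by
    intro ha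
    obtain ⟨h2, h4⟩ := adj_center_of_le_Hgraph hFG hF hns h3 k
    obtain ⟨m, -, hp⟩ := hF (F.connectedComponentMk (.inr (k, 3)))
    simpa using hp.eq_or_eq_or_eq_of_adj h2.symm h4.symm ha
  have leaf : ∀ w, F.Adj (.inl 2) w → w = .inl 1 := by
    rintro (i | ⟨l, j⟩) h <;> have h := hFG h <;>
      simp only [Hgraph_adj_inl_inl, Hgraph_adj_inl_inr, pathGraph_adj, Sum.inl.injEq,
        reduceCtorEq] at h ⊢ <;> omega
  have middle : ∀ w, F.Adj (.inl 1) w → w = .inl 2 ∨ w = .inl 0 := by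
    rintro (i | ⟨l, j⟩) h <;> have h := hFG h <;>
      simp only [Hgraph_adj_inl_inl, Hgraph_adj_inl_inr, pathGraph_adj, Sum.inl.injEq,
        reduceCtorEq] at h ⊢ <;> omega
  obtain ⟨w, haw, hw⟩ :=
    exists_adj_ne_of_pendant hF hns h3 (by simp) (by simp) (by simp) leaf middle
  rcases w with i | ⟨k, j⟩
  · have h := hFG haw
    simp only [Hgraph_adj_inl_inl, pathGraph_adj, ne_eq, Sum.inl.injEq] at h hw
    omega
  · obtain ⟨-, rfl⟩ := Hgraph_adj_inl_inr.mp (hFG haw)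
    exact center_not_adj k haw.symm

end Hgraph

theorem stmt11_general (n : ℕ) : ¬ HasPathFamilyFactor (Hgraph n) {2, 5} :=
  not_hasPathFamilyFactor_Hgraph (by simp) (by simp)

/-- `H_n` has no `{P₂, P₅}`-factor. -/
theorem stmt11 (n : ℕ) (hn : 1 ≤ n) : ¬ HasPathFamilyFactor (Hgraph n) {2, 5} :=
  stmt11_general n
end

section
/- For every n ≥ 1, let H_n be the graph obtained from the disjoint union of a path Q0 of order 3 and n disjoint paths Q1, …, Qn each of order 7, by joining an endvertex a of Q0 to the center b_i of each Q_i. Then for all X ⊆ V(H_n), c1(H_n − X) + (2/3)·c3(H_n − X) ≤ (4/3)·|X| + 2/3. -/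
open SimpleGraph

namespace Stmt12

/-! ### Finite pattern combinatorics on `Fin 7` -/

def adj7 (i j : Fin 7) : Prop := i.val + 1 = j.val ∨ j.val + 1 = i.val

instance : DecidableRel adj7 := fun _ _ => inferInstanceAs (Decidable (_ ∨ _))

def iso7 (S : Finset (Fin 7)) (b : Bool) (i : Fin 7) : Prop :=
  i ∉ S ∧ (∀ j, adj7 i j → j ∈ S) ∧ (i = 3 → b = true)

instance (S b) : DecidablePred (iso7 S b) := fun _ => inferInstanceAs (Decidable (_ ∧ _))

def tri7 (S : Finset (Fin 7)) (b : Bool) (A : Finset (Fin 7)) : Prop :=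
  A.card = 3 ∧ (∀ i ∈ A, i ∉ S) ∧
  (∃ x ∈ A, ∃ y ∈ A, ∃ z ∈ A, A = {x, y, z} ∧ adj7 x y ∧ adj7 y z) ∧
  (∀ i ∈ A, ∀ j, adj7 i j → j ∈ S ∨ j ∈ A) ∧ (3 ∈ A → b = true)

instance (S b) : DecidablePred (tri7 S b) := fun _ => inferInstanceAs (Decidable (_ ∧ _))

def countIso (S : Finset (Fin 7)) (b : Bool) : ℕ := (Finset.univ.filter (iso7 S b)).card

def countTri (S : Finset (Fin 7)) (b : Bool) : ℕ := (Finset.univ.filter (tri7 S b)).card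

set_option maxRecDepth 10000 in
theorem key7 : ∀ (S : Finset (Fin 7)) (b : Bool),
    3 * countIso S b + 2 * countTri S b ≤ 4 * S.card := by decide

/-! ### Adjacency in `Hgraph` -/

lemma Hadj_inl_inl {n : ℕ} {i j : Fin 3} :
    (Hgraph n).Adj (Sum.inl i) (Sum.inl j) ↔ (i.val + 1 = j.val ∨ j.val + 1 = i.val) := by
  simp only [Hgraph, fromRel_adj, pathGraph_adj]
  constructor
  · rintro ⟨hne, h | h⟩ <;>
    · rcases h with (⟨i', j', hi, hj, hadj⟩ | ⟨_, _, _, h, _⟩ | ⟨_, h, _⟩) <;> simp_all <;> omega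
  · intro h
    have hne : i ≠ j := by rintro rfl; omega
    exact ⟨by simpa using hne, Or.inl (Or.inl ⟨i, j, rfl, rfl, by omega⟩)⟩

lemma Hadj_inl_inr {n : ℕ} {i : Fin 3} {k : Fin n} {m : Fin 7} :
    (Hgraph n).Adj (Sum.inl i) (Sum.inr (k, m)) ↔ (i = 0 ∧ m = 3) := by
  simp only [Hgraph, fromRel_adj, pathGraph_adj]
  constructor
  · rintro ⟨hne, h | h⟩ <;>
    · rcases h with (⟨i', j', hi, hj, hadj⟩ | ⟨k', i', j', h1, h2, hadj⟩ | ⟨k', h1, h2⟩) <;>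
        simp_all
  · rintro ⟨rfl, rfl⟩
    exact ⟨by simp, Or.inl (Or.inr (Or.inr ⟨k, rfl, rfl⟩))⟩

lemma Hadj_inr_inl {n : ℕ} {i : Fin 3} {k : Fin n} {m : Fin 7} :
    (Hgraph n).Adj (Sum.inr (k, m)) (Sum.inl i) ↔ (i = 0 ∧ m = 3) := by
  rw [adj_comm]; exact Hadj_inl_inr

lemma Hadj_inr_inr {n : ℕ} {k l : Fin n} {i j : Fin 7} :
    (Hgraph n).Adj (Sum.inr (k, i)) (Sum.inr (l, j)) ↔ (k = l ∧ adj7 i j) := by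
  simp only [Hgraph, fromRel_adj, pathGraph_adj, adj7]
  constructor
  · rintro ⟨hne, h | h⟩ <;>
    · rcases h with (⟨i', j', hi, hj, hadj⟩ | ⟨k', i', j', h1, h2, hadj⟩ | ⟨k', h1, h2⟩) <;>
        simp_all <;> omega
  · rintro ⟨rfl, hadj⟩
    have hne : i ≠ j := by rintro rfl; omega
    refine ⟨by simpa using hne, ?_⟩
    rcases hadj with h | h
    · exact Or.inl (Or.inr (Or.inl ⟨k, i, j, rfl, rfl, Or.inl h⟩))
    · exact Or.inl (Or.inr (Or.inl ⟨k, i, j, rfl, rfl, Or.inr h⟩))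

/-! ### Generic component lemmas -/

section CompLemmas
variable {W : Type*} {G : SimpleGraph W}

lemma supp_mem_of_reachable {c : G.ConnectedComponent} {x u : W} (hx : x ∈ c.supp)
    (h : G.Reachable x u) : u ∈ c.supp := by
  rw [ConnectedComponent.mem_supp_iff] at hx ⊢
  rw [← hx]
  exact ConnectedComponent.sound h.symm

lemma two_step [DecidableEq W] {c : G.ConnectedComponent} {x y z : W}
    (hs : c.supp = {x, y, z}) (hxy : x ≠ y) :
    G.Adj x y ∨ (G.Adj x z ∧ G.Adj z y) := by
  have hx : x ∈ c.supp := by rw [hs]; simp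
  have hy : y ∈ c.supp := by rw [hs]; simp
  have hr : G.Reachable x y := by
    rw [ConnectedComponent.mem_supp_iff] at hx hy
    exact ConnectedComponent.exact (hx.trans hy.symm)
  obtain ⟨w⟩ := hr
  obtain ⟨q, hq, hqsub⟩ : ∃ q : G.Walk x y, q.IsPath ∧ ∀ u ∈ q.support, u ∈ c.supp :=
    ⟨w.bypass, w.bypass_isPath, fun u hu =>
      supp_mem_of_reachable hx ⟨(w.bypass).takeUntil u hu⟩⟩
  have hlen : q.length ≤ 2 := by
    have h1 : q.support.length = q.length + 1 := q.length_support
    have h2 : q.support.Nodup := hq.support_nodup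
    have h3 : q.support.toFinset ⊆ {x, y, z} := by
      intro u hu
      rw [List.mem_toFinset] at hu
      have := hqsub u hu
      rw [hs] at this
      simpa using this
    have h4 := Finset.card_le_card h3
    rw [List.toFinset_card_of_nodup h2] at h4
    have h5 : ({x, y, z} : Finset W).card ≤ 3 := by
      have a1 : ({x, y, z} : Finset W).card ≤ ({y, z} : Finset W).card + 1 :=
        Finset.card_insert_le _ _
      have a2 : ({y, z} : Finset W).card ≤ ({z} : Finset W).card + 1 :=
        Finset.card_insert_le _ _
      simp only [Finset.card_singleton] at a2
      omega
    omega
  cases q with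
  | nil => exact absurd rfl hxy
  | cons h p =>
    cases p with
    | nil => exact Or.inl h
    | cons h2 p2 =>
      cases p2 with
      | nil =>
        rename_i m
        have hm : m ∈ c.supp := hqsub m (by simp)
        rw [hs] at hm
        have hmx : m ≠ x := fun he => G.loopless.irrefl x (he ▸ h)
        have hmy : m ≠ y := fun he => G.loopless.irrefl y (he ▸ h2)
        have : m = z := by
          rcases hm with h' | h' | h' <;> simp_all
        subst this
        exact Or.inr ⟨h, h2⟩
      | cons h3 p3 => simp [SimpleGraph.Walk.length_cons] at hlen

lemma conn3_of_supp [DecidableEq W] {c : G.ConnectedComponent} {x y z : W}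
    (hxy : x ≠ y) (hxz : x ≠ z) (hyz : y ≠ z) (hs : c.supp = {x, y, z}) :
    ∃ p q r : W, ({p, q, r} : Set W) = {x, y, z} ∧ p ≠ q ∧ q ≠ r ∧ p ≠ r ∧
      G.Adj p q ∧ G.Adj q r := by
  have hs' : c.supp = {y, z, x} := by rw [hs]; ext u; simp; tauto
  have P1 := two_step hs hxy
  have P2 := two_step hs' hyz
  rcases P1 with h1 | ⟨h1a, h1b⟩
  · rcases P2 with h2 | ⟨h2a, h2b⟩
    · exact ⟨x, y, z, rfl, hxy, hyz, hxz, h1, h2⟩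
    · exact ⟨y, x, z, by ext u; simp; tauto, Ne.symm hxy, hxz, hyz, h2a, h2b⟩
  · exact ⟨x, z, y, by ext u; simp; tauto, hxz, Ne.symm hyz, hxy, h1a, h1b⟩

end CompLemmas


open Finset

variable {n : ℕ}

abbrev VV (n : ℕ) := Fin 3 ⊕ Fin n × Fin 7

open scoped Classical

def IsoV (X : Set (VV n)) (v : VV n) : Prop :=
  v ∉ X ∧ ∀ u, (Hgraph n).Adj v u → u ∈ X

def TriV (X : Set (VV n)) (A : Finset (VV n)) : Prop :=
  A.card = 3 ∧ (∀ v ∈ A, v ∉ X) ∧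
  (∃ x ∈ A, ∃ y ∈ A, ∃ z ∈ A, A = {x, y, z} ∧ (Hgraph n).Adj x y ∧ (Hgraph n).Adj y z) ∧
  (∀ v ∈ A, ∀ u, (Hgraph n).Adj v u → u ∈ X ∨ u ∈ A)

noncomputable def SX (X : Set (VV n)) (k : Fin n) : Finset (Fin 7) :=
  Finset.univ.filter (fun i => Sum.inr (k, i) ∈ X)

noncomputable def bX (X : Set (VV n)) : Bool := if Sum.inl 0 ∈ X then true else false

lemma bX_iff {X : Set (VV n)} : bX X = true ↔ Sum.inl 0 ∈ X := by
  by_cases h : Sum.inl 0 ∈ X <;> simp [bX, h]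

lemma mem_SX {X : Set (VV n)} {k : Fin n} {i : Fin 7} :
    i ∈ SX X k ↔ Sum.inr (k, i) ∈ X := by simp [SX]

/-- Characterization of adjacency lifted through `induce`. -/
lemma induce_adj_iff {X : Set (VV n)} {u v : ↥(Xᶜ)} :
    (SimpleGraph.induce Xᶜ (Hgraph n)).Adj u v ↔ (Hgraph n).Adj u.val v.val := by
  simp [comap_adj]

/-- Size-1 components give isolated vertices. -/
lemma card_one_comp {X : Set (VV n)}
    (c : (SimpleGraph.induce Xᶜ (Hgraph n)).ConnectedComponent)
    (hc : Nat.card c.supp = 1) :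
    ∃ v : ↥(Xᶜ), IsoV X v.val ∧ c.supp = {v} := by
  rw [Nat.card_coe_set_eq, Set.ncard_eq_one] at hc
  obtain ⟨v, hv⟩ := hc
  refine ⟨v, ⟨v.2, ?_⟩, hv⟩
  intro u hadj
  by_contra hu
  have hu' : u ∈ Xᶜ := hu
  have hadj' : (SimpleGraph.induce Xᶜ (Hgraph n)).Adj v ⟨u, hu'⟩ := by
    rw [induce_adj_iff]; exact hadj
  have hvc : v ∈ c.supp := by rw [hv]; simp
  have : (⟨u, hu'⟩ : ↥(Xᶜ)) ∈ c.supp := supp_mem_of_reachable hvc hadj'.reachable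
  rw [hv, Set.mem_singleton_iff] at this
  have huv : u = v.val := congrArg Subtype.val this
  exact (Hgraph n).loopless.irrefl v.val (huv ▸ hadj)

/-- Size-3 components give `TriV` triples. -/
lemma card_three_comp {X : Set (VV n)}
    (c : (SimpleGraph.induce Xᶜ (Hgraph n)).ConnectedComponent)
    (hc : Nat.card c.supp = 3) :
    ∃ A : Finset (VV n), TriV X A ∧ (↑A : Set (VV n)) = Subtype.val '' c.supp := by
  rw [Nat.card_coe_set_eq, Set.ncard_eq_three] at hc
  obtain ⟨x, y, z, hxy, hxz, hyz, hs⟩ := hc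
  have hmem : ∀ w : ↥(Xᶜ), w ∈ c.supp ↔ (w = x ∨ w = y ∨ w = z) := by
    intro w; rw [hs]; simp
  refine ⟨{x.val, y.val, z.val}, ⟨?_, ?_, ?_, ?_⟩, ?_⟩
  · rw [Finset.card_eq_three]
    exact ⟨x.val, y.val, z.val, fun h => hxy (Subtype.ext h), fun h => hxz (Subtype.ext h),
      fun h => hyz (Subtype.ext h), rfl⟩
  · intro v hv
    simp only [Finset.mem_insert, Finset.mem_singleton] at hv
    rcases hv with rfl | rfl | rfl
    exacts [x.2, y.2, z.2]
  · obtain ⟨p, q, r, hpqr, hpq, hqr, hpr, ha1, ha2⟩ := conn3_of_supp hxy hxz hyz hs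
    have hmm : ∀ w : ↥(Xᶜ), (w = p ∨ w = q ∨ w = r) ↔ (w = x ∨ w = y ∨ w = z) := by
      intro w
      have h1 := Set.ext_iff.mp hpqr w
      simpa using h1
    refine ⟨p.val, ?_, q.val, ?_, r.val, ?_, ?_, ?_, ?_⟩
    · have := (hmm p).mp (Or.inl rfl)
      simp only [Finset.mem_insert, Finset.mem_singleton]
      rcases this with rfl | rfl | rfl <;> simp
    · have := (hmm q).mp (Or.inr (Or.inl rfl))
      simp only [Finset.mem_insert, Finset.mem_singleton]
      rcases this with rfl | rfl | rfl <;> simp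
    · have := (hmm r).mp (Or.inr (Or.inr rfl))
      simp only [Finset.mem_insert, Finset.mem_singleton]
      rcases this with rfl | rfl | rfl <;> simp
    · -- {x.val,y.val,z.val} = {p.val,q.val,r.val}
      ext v
      simp only [Finset.mem_insert, Finset.mem_singleton]
      constructor
      · rintro (rfl | rfl | rfl)
        · rcases (hmm x).mpr (Or.inl rfl) with h | h | h <;> rw [h] <;> tauto
        · rcases (hmm y).mpr (Or.inr (Or.inl rfl)) with h | h | h <;> rw [h] <;> tauto
        · rcases (hmm z).mpr (Or.inr (Or.inr rfl)) with h | h | h <;> rw [h] <;> tauto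
      · rintro (rfl | rfl | rfl)
        · rcases (hmm p).mp (Or.inl rfl) with h | h | h <;> rw [h] <;> tauto
        · rcases (hmm q).mp (Or.inr (Or.inl rfl)) with h | h | h <;> rw [h] <;> tauto
        · rcases (hmm r).mp (Or.inr (Or.inr rfl)) with h | h | h <;> rw [h] <;> tauto
    · exact induce_adj_iff.mp ha1
    · exact induce_adj_iff.mp ha2
  · -- closure
    intro v hv u hadj
    simp only [Finset.mem_insert, Finset.mem_singleton] at hv
    by_cases hu : u ∈ X
    · exact Or.inl hu
    · right
      have hu' : u ∈ Xᶜ := hu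
      have hwmem : ∀ w : ↥(Xᶜ), w.val = v → (⟨u, hu'⟩ : ↥(Xᶜ)) ∈ c.supp := by
        intro w hw
        have hws : w ∈ c.supp := by
          rw [hmem]
          rcases hv with rfl | rfl | rfl
          · exact Or.inl (Subtype.ext hw)
          · exact Or.inr (Or.inl (Subtype.ext hw))
          · exact Or.inr (Or.inr (Subtype.ext hw))
        apply supp_mem_of_reachable hws
        apply Adj.reachable
        rw [induce_adj_iff, hw]
        exact hadj
      have : (⟨u, hu'⟩ : ↥(Xᶜ)) ∈ c.supp := by
        rcases hv with rfl | rfl | rfl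
        exacts [hwmem x rfl, hwmem y rfl, hwmem z rfl]
      rw [hmem] at this
      simp only [Finset.mem_insert, Finset.mem_singleton]
      rcases this with h | h | h
      · exact Or.inl (congrArg Subtype.val h)
      · exact Or.inr (Or.inl (congrArg Subtype.val h))
      · exact Or.inr (Or.inr (congrArg Subtype.val h))
  · rw [hs]
    ext v
    simp only [Finset.coe_insert, Finset.coe_singleton, Set.mem_insert_iff,
      Set.mem_singleton_iff, Set.mem_image]
    constructor
    · rintro (rfl | rfl | rfl)
      exacts [⟨x, Or.inl rfl, rfl⟩, ⟨y, Or.inr (Or.inl rfl), rfl⟩, ⟨z, Or.inr (Or.inr rfl), rfl⟩]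
    · rintro ⟨w, hw, rfl⟩
      rcases hw with rfl | rfl | rfl <;> tauto


variable {n : ℕ}

open scoped Classical

lemma TriV.nbr {X : Set (VV n)} {A : Finset (VV n)} (hA : TriV X A) {v : VV n} (hv : v ∈ A) :
    ∃ u ∈ A, (Hgraph n).Adj v u := by
  obtain ⟨hcard, hXd, ⟨x, hx, y, hy, z, hz, hAe, hxy, hyz⟩, hcl⟩ := hA
  rw [hAe] at hv
  simp only [Finset.mem_insert, Finset.mem_singleton] at hv
  rcases hv with rfl | rfl | rfl
  · exact ⟨y, hy, hxy⟩
  · exact ⟨x, hx, hxy.symm⟩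
  · exact ⟨y, hy, hyz.symm⟩

lemma TriV.not_iso {X : Set (VV n)} {A : Finset (VV n)} (hA : TriV X A) {v : VV n}
    (hv : v ∈ A) : ¬ IsoV X v := by
  rintro ⟨-, hcl⟩
  obtain ⟨u, hu, hadj⟩ := hA.nbr hv
  exact hA.2.1 u hu (hcl u hadj)

lemma TriV.unique_a {X : Set (VV n)} {A B : Finset (VV n)} (hA : TriV X A) (hB : TriV X B)
    {v : VV n} (hvA : v ∈ A) (hvB : v ∈ B) : A = B := by
  -- first show B ⊆ A
  have key : ∀ {A B : Finset (VV n)}, TriV X A → TriV X B → v ∈ A → v ∈ B → B ⊆ A := by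
    intro A B hA hB hvA hvB
    obtain ⟨hcard, hXd, ⟨x, hx, y, hy, z, hz, hAe, hxy, hyz⟩, hcl⟩ := hB
    have hstep : ∀ {p q : VV n}, p ∈ A → q ∈ B → (Hgraph n).Adj p q → q ∈ A := by
      intro p q hp hq hadj
      rcases hA.2.2.2 p hp q hadj with h | h
      · exact absurd h (hXd q hq)
      · exact h
    rw [hAe] at hvB
    simp only [Finset.mem_insert, Finset.mem_singleton] at hvB
    have hxA_yA_zA : x ∈ A ∧ y ∈ A ∧ z ∈ A := by
      rcases hvB with rfl | rfl | rfl
      · have hyA : y ∈ A := hstep hvA hy hxy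
        exact ⟨hvA, hyA, hstep hyA hz hyz⟩
      · have hxA : x ∈ A := hstep hvA hx hxy.symm
        exact ⟨hxA, hvA, hstep hvA hz hyz⟩
      · have hyA : y ∈ A := hstep hvA hy hyz.symm
        exact ⟨hstep hyA hx hxy.symm, hyA, hvA⟩
    rw [hAe]
    intro w hw
    simp only [Finset.mem_insert, Finset.mem_singleton] at hw
    rcases hw with rfl | rfl | rfl
    exacts [hxA_yA_zA.1, hxA_yA_zA.2.1, hxA_yA_zA.2.2]
  have h1 : B ⊆ A := key hA hB hvA hvB
  exact (Finset.eq_of_subset_of_card_le h1 (hA.1.le.trans hB.1.ge)).symm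

/-- A triple not containing `a = inl 0` lives inside a single `Q_k`. -/
lemma TriV.loc {X : Set (VV n)} {A : Finset (VV n)} (hA : TriV X A)
    (ha : Sum.inl 0 ∉ A) : ∃ k : Fin n, ∀ v ∈ A, ∃ i, v = Sum.inr (k, i) := by
  obtain ⟨hcard, hXd, ⟨x, hx, y, hy, z, hz, hAe, hxy, hyz⟩, hcl⟩ := hA
  have hxz : x ≠ z := by
    rintro rfl
    have : A.card ≤ 2 := by
      rw [hAe]
      have he : ({x, y, x} : Finset (VV n)) = {x, y} := by ext w; simp; tauto
      rw [he]
      exact (Finset.card_insert_le _ _).trans (by simp)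
    omega
  -- x cannot be inl
  obtain ⟨k, i', rfl⟩ : ∃ k i', x = Sum.inr (k, i') := by
    cases x with
    | inl i =>
      exfalso
      -- then y is inl, z is inl, and {i,j,l} distinct in Fin 3 forces 0 among them
      have hi0 : i ≠ 0 := by rintro rfl; exact ha (hAe ▸ hx)
      obtain ⟨j, rfl⟩ : ∃ j, y = Sum.inl j := by
        cases y with
        | inl j => exact ⟨j, rfl⟩
        | inr p =>
          exfalso
          obtain ⟨p1, p2⟩ := p
          rw [Hadj_inl_inr] at hxy
          exact hi0 hxy.1
      have hj0 : j ≠ 0 := by rintro rfl; exact ha (hAe ▸ hy)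
      obtain ⟨l, rfl⟩ : ∃ l, z = Sum.inl l := by
        cases z with
        | inl l => exact ⟨l, rfl⟩
        | inr p =>
          exfalso
          obtain ⟨p1, p2⟩ := p
          rw [Hadj_inl_inr] at hyz
          exact hj0 hyz.1
      have hl0 : l ≠ 0 := by rintro rfl; exact ha (hAe ▸ hz)
      have d1 : i ≠ j := fun h => (hxy.ne) (by rw [h])
      have d2 : j ≠ l := fun h => (hyz.ne) (by rw [h])
      have d3 : i ≠ l := fun h => hxz (by rw [h])
      have := i.isLt; have := j.isLt; have := l.isLt
      have hij : i.val ≠ j.val := fun h => d1 (Fin.ext h)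
      have hjl : j.val ≠ l.val := fun h => d2 (Fin.ext h)
      have hil : i.val ≠ l.val := fun h => d3 (Fin.ext h)
      have hi0' : i.val ≠ 0 := fun h => hi0 (Fin.ext h)
      have hj0' : j.val ≠ 0 := fun h => hj0 (Fin.ext h)
      have hl0' : l.val ≠ 0 := fun h => hl0 (Fin.ext h)
      omega
    | inr p => exact ⟨p.1, p.2, by simp⟩
  refine ⟨k, ?_⟩
  obtain ⟨j', rfl⟩ : ∃ j', y = Sum.inr (k, j') := by
    cases y with
    | inl j =>
      exfalso
      rw [Hadj_inr_inl] at hxy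
      exact ha (by rw [hxy.1] at hy; exact hy)
    | inr p =>
      obtain ⟨l, j'⟩ := p
      rw [Hadj_inr_inr] at hxy
      exact ⟨j', by rw [hxy.1]⟩
  obtain ⟨l', rfl⟩ : ∃ l', z = Sum.inr (k, l') := by
    cases z with
    | inl j =>
      exfalso
      rw [Hadj_inr_inl] at hyz
      exact ha (by rw [hyz.1] at hz; exact hz)
    | inr p =>
      obtain ⟨l, l'⟩ := p
      rw [Hadj_inr_inr] at hyz
      exact ⟨l', by rw [hyz.1]⟩
  intro v hv
  rw [hAe] at hv
  simp only [Finset.mem_insert, Finset.mem_singleton] at hv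
  rcases hv with rfl | rfl | rfl
  exacts [⟨i', rfl⟩, ⟨j', rfl⟩, ⟨l', rfl⟩]


variable {n : ℕ}

open scoped Classical

lemma isoTransfer {X : Set (VV n)} {k : Fin n} {i : Fin 7} :
    IsoV X (Sum.inr (k, i)) ↔ iso7 (SX X k) (bX X) i := by
  constructor
  · rintro ⟨hnX, hcl⟩
    refine ⟨fun h => hnX (mem_SX.mp h), ?_, ?_⟩
    · intro j hj
      rw [mem_SX]
      exact hcl (Sum.inr (k, j)) (Hadj_inr_inr.mpr ⟨rfl, hj⟩)
    · rintro rfl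
      rw [bX_iff]
      exact hcl (Sum.inl 0) (Hadj_inr_inl.mpr ⟨rfl, rfl⟩)
  · rintro ⟨hnS, hcl, h3⟩
    refine ⟨fun h => hnS (mem_SX.mpr h), ?_⟩
    intro u hadj
    cases u with
    | inl j =>
      rw [Hadj_inr_inl] at hadj
      obtain ⟨rfl, rfl⟩ := hadj
      rw [← bX_iff]
      exact h3 rfl
    | inr p =>
      obtain ⟨l, j⟩ := p
      rw [Hadj_inr_inr] at hadj
      obtain ⟨rfl, hj⟩ := hadj
      rw [← mem_SX]
      exact hcl j hj

lemma triTransfer {X : Set (VV n)} {k : Fin n} {A' : Finset (Fin 7)} :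
    TriV X (A'.image (fun i => Sum.inr (k, i))) ↔ tri7 (SX X k) (bX X) A' := by
  have hinj : Function.Injective (fun i : Fin 7 => (Sum.inr (k, i) : VV n)) := by
    intro a b h
    simpa using h
  have hmemA : ∀ j : Fin 7, (Sum.inr (k, j) : VV n) ∈ A'.image (fun i => Sum.inr (k, i)) ↔
      j ∈ A' := by
    intro j
    constructor
    · intro h
      obtain ⟨j', hj', he⟩ := Finset.mem_image.mp h
      have : j' = j := by simpa using he
      exact this ▸ hj'
    · intro h
      exact Finset.mem_image.mpr ⟨j, h, rfl⟩
  constructor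
  · rintro ⟨hcard, hXd, ⟨x, hx, y, hy, z, hz, hAe, hxy, hyz⟩, hcl⟩
    obtain ⟨x', hx', rfl⟩ := Finset.mem_image.mp hx
    obtain ⟨y', hy', rfl⟩ := Finset.mem_image.mp hy
    obtain ⟨z', hz', rfl⟩ := Finset.mem_image.mp hz
    refine ⟨?_, ?_, ?_, ?_, ?_⟩
    · rw [← Finset.card_image_of_injective A' hinj]
      exact hcard
    · intro i hi hiS
      exact hXd _ (Finset.mem_image.mpr ⟨i, hi, rfl⟩) (mem_SX.mp hiS)
    · refine ⟨x', hx', y', hy', z', hz', ?_, (Hadj_inr_inr.mp hxy).2, (Hadj_inr_inr.mp hyz).2⟩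
      have himg : A'.image (fun i => (Sum.inr (k, i) : VV n)) =
          ({x', y', z'} : Finset (Fin 7)).image (fun i => (Sum.inr (k, i) : VV n)) := by
        rw [hAe]; simp [Finset.image_insert, Finset.image_singleton]
      exact Finset.image_injective hinj himg
    · intro i hi j hj
      rcases hcl (Sum.inr (k, i)) (Finset.mem_image.mpr ⟨i, hi, rfl⟩) (Sum.inr (k, j))
          (Hadj_inr_inr.mpr ⟨rfl, hj⟩) with h | h
      · exact Or.inl (mem_SX.mpr h)
      · exact Or.inr ((hmemA j).mp h)
    · intro h3
      rcases hcl (Sum.inr (k, 3)) (Finset.mem_image.mpr ⟨3, h3, rfl⟩) (Sum.inl 0)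
          (Hadj_inr_inl.mpr ⟨rfl, rfl⟩) with h | h
      · exact bX_iff.mpr h
      · exfalso
        obtain ⟨j', _, he⟩ := Finset.mem_image.mp h
        exact absurd he (by simp)
  · rintro ⟨hcard, hSd, ⟨x', hx', y', hy', z', hz', hAe, hxy, hyz⟩, hcl, h3⟩
    refine ⟨?_, ?_, ?_, ?_⟩
    · rw [Finset.card_image_of_injective A' hinj]
      exact hcard
    · intro v hv
      obtain ⟨i, hi, rfl⟩ := Finset.mem_image.mp hv
      intro hvX
      exact hSd i hi (mem_SX.mpr hvX)
    · refine ⟨Sum.inr (k, x'), (hmemA x').mpr hx', Sum.inr (k, y'), (hmemA y').mpr hy',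
        Sum.inr (k, z'), (hmemA z').mpr hz', ?_, Hadj_inr_inr.mpr ⟨rfl, hxy⟩,
        Hadj_inr_inr.mpr ⟨rfl, hyz⟩⟩
      rw [hAe]
      simp [Finset.image_insert, Finset.image_singleton]
    · intro v hv u hadj
      obtain ⟨i, hi, rfl⟩ := Finset.mem_image.mp hv
      cases u with
      | inl j =>
        rw [Hadj_inr_inl] at hadj
        obtain ⟨rfl, rfl⟩ := hadj
        exact Or.inl (bX_iff.mp (h3 hi))
      | inr p =>
        obtain ⟨l, j⟩ := p
        rw [Hadj_inr_inr] at hadj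
        obtain ⟨rfl, hj⟩ := hadj
        rcases hcl i hi j hj with h | h
        · exact Or.inl (mem_SX.mp h)
        · exact Or.inr ((hmemA j).mpr h)


variable {n : ℕ}

open scoped Classical

lemma n1_le (X : Set (VV n)) :
    cCount (SimpleGraph.induce Xᶜ (Hgraph n)) 1 ≤
      (Finset.univ.filter (IsoV X)).card := by
  unfold cCount
  have hf : ∀ cp : {c : (SimpleGraph.induce Xᶜ (Hgraph n)).ConnectedComponent //
      Nat.card c.supp = 1}, ∃ v : ↥(Xᶜ), IsoV X v.val ∧ cp.1.supp = {v} :=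
    fun cp => card_one_comp cp.1 cp.2
  choose g hg1 hg2 using hf
  have hinj : Function.Injective (fun cp => (⟨(g cp).val, hg1 cp⟩ : {v : VV n // IsoV X v})) := by
    intro c1 c2 h
    have hval : (g c1).val = (g c2).val := by simpa using h
    have : g c1 = g c2 := Subtype.ext hval
    have hsupp : c1.1.supp = c2.1.supp := by rw [hg2 c1, hg2 c2, this]
    exact Subtype.ext (ConnectedComponent.supp_injective hsupp)
  calc Nat.card {c : (SimpleGraph.induce Xᶜ (Hgraph n)).ConnectedComponent //
        Nat.card c.supp = 1}
      ≤ Nat.card {v : VV n // IsoV X v} := Nat.card_le_card_of_injective _ hinj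
    _ = (Finset.univ.filter (IsoV X)).card := by
        rw [Nat.card_eq_fintype_card, Fintype.card_subtype]

lemma n3_le (X : Set (VV n)) :
    cCount (SimpleGraph.induce Xᶜ (Hgraph n)) 3 ≤
      (Finset.univ.filter (TriV X)).card := by
  unfold cCount
  have hf : ∀ cp : {c : (SimpleGraph.induce Xᶜ (Hgraph n)).ConnectedComponent //
      Nat.card c.supp = 3}, ∃ A : Finset (VV n), TriV X A ∧
        (↑A : Set (VV n)) = Subtype.val '' cp.1.supp :=
    fun cp => card_three_comp cp.1 cp.2
  choose g hg1 hg2 using hf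
  have hinj : Function.Injective (fun cp => (⟨g cp, hg1 cp⟩ : {A : Finset (VV n) // TriV X A})) := by
    intro c1 c2 h
    have hval : g c1 = g c2 := by simpa using h
    have himg : Subtype.val '' c1.1.supp = Subtype.val '' c2.1.supp := by
      rw [← hg2 c1, ← hg2 c2, hval]
    have hsupp : c1.1.supp = c2.1.supp :=
      Set.image_injective.mpr Subtype.val_injective himg
    exact Subtype.ext (ConnectedComponent.supp_injective hsupp)
  calc Nat.card {c : (SimpleGraph.induce Xᶜ (Hgraph n)).ConnectedComponent //
        Nat.card c.supp = 3}
      ≤ Nat.card {A : Finset (VV n) // TriV X A} := Nat.card_le_card_of_injective _ hinj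
    _ = (Finset.univ.filter (TriV X)).card := by
        rw [Nat.card_eq_fintype_card, Fintype.card_subtype]

lemma isoInl0 {X : Set (VV n)} (h : IsoV X (Sum.inl 0)) : Sum.inl 1 ∈ X :=
  h.2 (Sum.inl 1) (Hadj_inl_inl.mpr (by norm_num))

lemma isoInl1 {X : Set (VV n)} (h : IsoV X (Sum.inl 1)) :
    Sum.inl 0 ∈ X ∧ Sum.inl 2 ∈ X :=
  ⟨h.2 (Sum.inl 0) (Hadj_inl_inl.mpr (by norm_num)),
   h.2 (Sum.inl 2) (Hadj_inl_inl.mpr (by norm_num))⟩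

lemma isoInl2 {X : Set (VV n)} (h : IsoV X (Sum.inl 2)) : Sum.inl 1 ∈ X :=
  h.2 (Sum.inl 1) (Hadj_inl_inl.mpr (by norm_num))

lemma q0_bound (X : Set (VV n)) (ta : ℕ) (hta : ta ≤ 1)
    (htri : 1 ≤ ta → ∃ A, TriV X A ∧ Sum.inl 0 ∈ A) :
    3 * (∑ i : Fin 3, if IsoV X (Sum.inl i) then 1 else 0) + 2 * ta ≤
      4 * (∑ i : Fin 3, if Sum.inl i ∈ X then 1 else 0) + 2 := by
  rw [Fin.sum_univ_three, Fin.sum_univ_three]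
  have i0le : (if IsoV X (Sum.inl 0) then (1:ℕ) else 0) ≤ 1 := by split <;> omega
  have i1le : (if IsoV X (Sum.inl 1) then (1:ℕ) else 0) ≤ 1 := by split <;> omega
  have i2le : (if IsoV X (Sum.inl 2) then (1:ℕ) else 0) ≤ 1 := by split <;> omega
  have f0 : (if IsoV X (Sum.inl 0) then (1:ℕ) else 0) = 1 →
      ((if Sum.inl 1 ∈ X then (1:ℕ) else 0) = 1 ∧
       (if Sum.inl 0 ∈ X then (1:ℕ) else 0) = 0 ∧ ta = 0) := by
    intro h
    have h0 : IsoV X (Sum.inl 0) := by by_contra hc; rw [if_neg hc] at h; omega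
    refine ⟨if_pos (isoInl0 h0), if_neg h0.1, ?_⟩
    by_contra hne
    obtain ⟨A, hA, haA⟩ := htri (by omega)
    exact hA.not_iso haA h0
  have f1 : (if IsoV X (Sum.inl 1) then (1:ℕ) else 0) = 1 →
      ((if Sum.inl 0 ∈ X then (1:ℕ) else 0) = 1 ∧
       (if Sum.inl 2 ∈ X then (1:ℕ) else 0) = 1 ∧
       (if Sum.inl 1 ∈ X then (1:ℕ) else 0) = 0) := by
    intro h
    have h1 : IsoV X (Sum.inl 1) := by by_contra hc; rw [if_neg hc] at h; omega
    exact ⟨if_pos (isoInl1 h1).1, if_pos (isoInl1 h1).2, if_neg h1.1⟩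
  have f2 : (if IsoV X (Sum.inl 2) then (1:ℕ) else 0) = 1 →
      ((if Sum.inl 1 ∈ X then (1:ℕ) else 0) = 1 ∧
       (if Sum.inl 2 ∈ X then (1:ℕ) else 0) = 0) := by
    intro h
    have h2 : IsoV X (Sum.inl 2) := by by_contra hc; rw [if_neg hc] at h; omega
    exact ⟨if_pos (isoInl2 h2), if_neg h2.1⟩
  have fta : 1 ≤ ta → (if Sum.inl 0 ∈ X then (1:ℕ) else 0) = 0 := by
    intro h
    obtain ⟨A, hA, haA⟩ := htri h
    exact if_neg (hA.2.1 _ haA)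
  have fta2 : 1 ≤ ta → (if IsoV X (Sum.inl 0) then (1:ℕ) else 0) = 0 := by
    intro h
    obtain ⟨A, hA, haA⟩ := htri h
    exact if_neg (hA.not_iso haA)
  omega


noncomputable def kOf (hn : 1 ≤ n) (A : Finset (VV n)) : Fin n :=
  if h : ∃ k : Fin n, ∀ v ∈ A, ∃ i, v = Sum.inr (k, i) then h.choose else ⟨0, hn⟩

lemma kOf_repr (hn : 1 ≤ n) {A : Finset (VV n)}
    (hloc : ∃ k : Fin n, ∀ v ∈ A, ∃ i, v = Sum.inr (k, i)) :
    A = (Finset.univ.filter (fun i => Sum.inr (kOf hn A, i) ∈ A)).image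
      (fun i => (Sum.inr (kOf hn A, i) : VV n)) := by
  have hkOf : ∀ v ∈ A, ∃ i, v = Sum.inr (kOf hn A, i) := by
    unfold kOf
    rw [dif_pos hloc]
    exact hloc.choose_spec
  ext v
  simp only [Finset.mem_image, Finset.mem_filter, Finset.mem_univ, true_and]
  constructor
  · intro hv
    obtain ⟨i, rfl⟩ := hkOf v hv
    exact ⟨i, hv, rfl⟩
  · rintro ⟨i, hi, rfl⟩
    exact hi

/-- Main counting bound over ℕ. -/
lemma main_nat (hn : 1 ≤ n) (X : Set (VV n)) :
    3 * cCount (SimpleGraph.induce Xᶜ (Hgraph n)) 1 +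
      2 * cCount (SimpleGraph.induce Xᶜ (Hgraph n)) 3 ≤ 4 * X.ncard + 2 := by
  classical
  -- abbreviations
  have h1 := n1_le X
  have h3 := n3_le X
  -- decompose the isolated-vertex count
  have hIsoCard : (Finset.univ.filter (IsoV X)).card =
      (∑ i : Fin 3, if IsoV X (Sum.inl i) then 1 else 0) +
      ∑ k : Fin n, countIso (SX X k) (bX X) := by
    rw [Finset.card_filter, Fintype.sum_sum_type]
    congr 1
    rw [Fintype.sum_prod_type]
    refine Finset.sum_congr rfl fun k _ => ?_
    rw [countIso, Finset.card_filter]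
    refine Finset.sum_congr rfl fun i _ => ?_
    exact if_congr isoTransfer rfl rfl
  -- decompose the triple count
  set TriF := Finset.univ.filter (TriV X) with hTriF
  set TA := TriF.filter (fun A => Sum.inl 0 ∈ A) with hTAdef
  set TB := TriF.filter (fun A => ¬ Sum.inl 0 ∈ A) with hTBdef
  have hsplit : TA.card + TB.card = TriF.card :=
    Finset.card_filter_add_card_filter_not _
  have hTA : TA.card ≤ 1 := by
    rw [Finset.card_le_one]
    intro A hA B hB
    rw [hTAdef, Finset.mem_filter, hTriF, Finset.mem_filter] at hA hB
    exact TriV.unique_a hA.1.2 hB.1.2 hA.2 hB.2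
  have htri : 1 ≤ TA.card → ∃ A, TriV X A ∧ Sum.inl 0 ∈ A := by
    intro h
    obtain ⟨A, hA⟩ := Finset.card_pos.mp h
    rw [hTAdef, Finset.mem_filter, hTriF, Finset.mem_filter] at hA
    exact ⟨A, hA.1.2, hA.2⟩
  -- TB is bounded by the pattern counts
  have hTB : TB.card ≤ ∑ k : Fin n, countTri (SX X k) (bX X) := by
    set t := Finset.univ.filter
      (fun p : Fin n × Finset (Fin 7) => tri7 (SX X p.1) (bX X) p.2) with htdef
    have hmemTB : ∀ C : Finset (VV n), C ∈ TB → TriV X C ∧ Sum.inl 0 ∉ C := by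
      intro C hC
      rw [hTBdef, Finset.mem_filter, hTriF, Finset.mem_filter] at hC
      exact ⟨hC.1.2, hC.2⟩
    have hbound : TB.card ≤ t.card := by
      apply Finset.card_le_card_of_injOn
        (fun A => (kOf hn A, Finset.univ.filter (fun i => Sum.inr (kOf hn A, i) ∈ A)))
      · intro A hA
        obtain ⟨hTri, hnotin⟩ := hmemTB A hA
        have hrepr := kOf_repr hn (hTri.loc hnotin)
        simp only [Finset.mem_coe, htdef, Finset.mem_filter]
        exact ⟨Finset.mem_univ _, triTransfer.mp (by rw [← hrepr]; exact hTri)⟩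
      · intro A hA B hB heq
        rw [Finset.mem_coe] at hA hB
        obtain ⟨hTriA, hnotinA⟩ := hmemTB A hA
        obtain ⟨hTriB, hnotinB⟩ := hmemTB B hB
        obtain ⟨hk, hp⟩ := Prod.ext_iff.mp heq
        rw [kOf_repr hn (hTriA.loc hnotinA), kOf_repr hn (hTriB.loc hnotinB)]
        simp only at hk hp
        rw [hk] at hp ⊢
        rw [hp]
    have htcard : t.card = ∑ k : Fin n, countTri (SX X k) (bX X) := by
      rw [htdef, Finset.card_filter, Fintype.sum_prod_type]
      refine Finset.sum_congr rfl fun k _ => ?_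
      rw [countTri, Finset.card_filter]
    omega
  -- per-path bound
  have hK : ∑ k : Fin n, (3 * countIso (SX X k) (bX X) + 2 * countTri (SX X k) (bX X)) ≤
      ∑ k : Fin n, 4 * (SX X k).card :=
    Finset.sum_le_sum fun k _ => key7 (SX X k) (bX X)
  have hsum1 : ∑ k : Fin n, (3 * countIso (SX X k) (bX X) + 2 * countTri (SX X k) (bX X)) =
      3 * (∑ k : Fin n, countIso (SX X k) (bX X)) +
      2 * (∑ k : Fin n, countTri (SX X k) (bX X)) := by
    rw [Finset.sum_add_distrib, Finset.mul_sum, Finset.mul_sum]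
  have hsum2 : ∑ k : Fin n, 4 * (SX X k).card = 4 * ∑ k : Fin n, (SX X k).card :=
    (Finset.mul_sum _ _ _).symm
  -- |X| decomposition
  have hXcard : X.ncard =
      (∑ i : Fin 3, if Sum.inl i ∈ X then 1 else 0) + ∑ k : Fin n, (SX X k).card := by
    have hXf : X.toFinset = Finset.univ.filter (fun v => v ∈ X) := by ext v; simp
    rw [Set.ncard_eq_toFinset_card', hXf, Finset.card_filter, Fintype.sum_sum_type]
    congr 1
    rw [Fintype.sum_prod_type]
    refine Finset.sum_congr rfl fun k _ => ?_
    rw [SX, Finset.card_filter]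
  have hq0 := q0_bound X TA.card hTA htri
  omega


end Stmt12

/-- `c₁(H_n−X) + (2/3)c₃(H_n−X) ≤ (4/3)|X| + 2/3` for all `X`. -/
theorem stmt12 (n : ℕ) (hn : 1 ≤ n) (X : Set (Fin 3 ⊕ Fin n × Fin 7)) :
    (cCount (SimpleGraph.induce Xᶜ (Hgraph n)) 1 : ℚ) +
        (2 / 3) * cCount (SimpleGraph.induce Xᶜ (Hgraph n)) 3 ≤
      (4 / 3) * X.ncard + 2 / 3 := by
  have key := Stmt12.main_nat hn X
  have key' : 3 * (cCount (SimpleGraph.induce Xᶜ (Hgraph n)) 1 : ℚ) +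
      2 * (cCount (SimpleGraph.induce Xᶜ (Hgraph n)) 3 : ℚ) ≤ 4 * (X.ncard : ℚ) + 2 := by
    exact_mod_cast key
  linarith
end

section
/- There exist infinitely many graphs G that have no {P2,P5}-factor but satisfy c1(G−X) + (2/3)·c3(G−X) ≤ (4/3)·|X| + 2/3 for all X ⊆ V(G). Hence the bound (4/3)|X| + 1/3 in the sufficient condition for a {P2,P5}-factor cannot be relaxed to (4/3)|X| + 2/3. -/
open SimpleGraph

/-! The graph is a triangle together with a perfect matching on the remaining vertices, i.e. a
disjoint union of cliques `{0, 1, 2}, {3, 4}, {5, 6}, …`. Every component of a spanning path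
forest lies inside a component of the graph, and a triangle cannot be split into paths with
`2` or `5` vertices, so there is no `{P₂, P₅}`-factor. On the other hand, after deleting `X`
the only possible component with three vertices is the whole triangle, so `c₃(G - X) ≤ 1`;
and every isolated vertex of `G - X` has a clique partner in `X`, distinct isolated vertices
having distinct partners, so `c₁(G - X) ≤ |X|`. -/

theorem SimpleGraph.Reachable.mem_of_adj_closed {V : Type*} {G : SimpleGraph V} {S : Set V}
    (hS : ∀ u v, G.Adj u v → u ∈ S → v ∈ S) {a b : V} (h : G.Reachable a b) (ha : a ∈ S) :
    b ∈ S := by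
  obtain ⟨p⟩ := h
  induction p with
  | nil => exact ha
  | cons hadj _ ih => exact ih (hS _ _ hadj ha)

theorem IsPathComp.ncard_supp {V : Type*} {F : SimpleGraph V} {n : ℕ}
    {c : F.ConnectedComponent} (h : IsPathComp F n c) : c.supp.ncard = n := by
  obtain ⟨e⟩ := h
  rw [← Nat.card_coe_set_eq, Nat.card_congr e.toEquiv, Nat.card_eq_fintype_card,
    Fintype.card_fin]

theorem not_hasPathFamilyFactor_two_five {V : Type*} {G : SimpleGraph V} {S : Set V}
    (hS : S.ncard = 3) (hclosed : ∀ u v, G.Adj u v → u ∈ S → v ∈ S) :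
    ¬ HasPathFamilyFactor G {2, 5} := by
  rintro ⟨F, hFG, hF⟩
  have hfin : S.Finite := Set.finite_of_ncard_ne_zero (by omega)
  have hsub : ∀ v ∈ S, (F.connectedComponentMk v).supp ⊆ S := fun v hv u hu =>
    (ConnectedComponent.eq.1 hu).symm.mem_of_adj_closed (fun a b h => hclosed a b (hFG h)) hv
  have hcard : ∀ v ∈ S, (F.connectedComponentMk v).supp.ncard = 2 := by
    intro v hv
    obtain ⟨n, hn, hpath⟩ := hF (F.connectedComponentMk v)
    have hle := Set.ncard_le_ncard (hsub v hv) hfin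
    rw [hpath.ncard_supp] at hle ⊢
    simp only [Set.mem_insert_iff, Set.mem_singleton_iff] at hn
    omega
  obtain ⟨v, hv⟩ := Set.nonempty_of_ncard_ne_zero (s := S) (by omega)
  obtain ⟨w, hw, hwv⟩ := Set.exists_mem_notMem_of_ncard_lt_ncard
    (s := (F.connectedComponentMk v).supp) (t := S)
    (by rw [hcard v hv, hS]; norm_num) (hfin.subset (hsub v hv))
  have hdisj : Disjoint (F.connectedComponentMk v).supp (F.connectedComponentMk w).supp :=
    F.pairwise_disjoint_supp_connectedComponent fun h => hwv (h ▸ rfl)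
  have hunion := Set.ncard_le_ncard (Set.union_subset (hsub v hv) (hsub w hw)) hfin
  rw [Set.ncard_union_eq hdisj (hfin.subset (hsub v hv)) (hfin.subset (hsub w hw)), hcard v hv,
    hcard w hw] at hunion
  omega

namespace SimpleGraph

variable {V W : Type*}

def fiberCliques (g : V → W) : SimpleGraph V where
  Adj a b := a ≠ b ∧ g a = g b
  symm := ⟨fun _ _ h => ⟨h.1.symm, h.2.symm⟩⟩
  loopless := ⟨fun _ h => h.1 rfl⟩

namespace fiberCliques

variable {g : V → W}

@[simp]
theorem adj_iff {a b : V} : (fiberCliques g).Adj a b ↔ a ≠ b ∧ g a = g b := Iff.rfl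

theorem reachable_iff {a b : V} : (fiberCliques g).Reachable a b ↔ g a = g b := by
  refine ⟨fun h => Eq.symm (h.mem_of_adj_closed (S := {v | g v = g a})
    (fun _ _ huv hu => (adj_iff.1 huv).2.symm.trans hu) rfl), fun h => ?_⟩
  by_cases hab : a = b
  · exact hab ▸ Reachable.refl a
  · exact Adj.reachable (adj_iff.2 ⟨hab, h⟩)

theorem induce_eq (s : Set V) :
    (fiberCliques g).induce s = fiberCliques (g ∘ (↑) : s → W) := by
  ext a b
  simp [Subtype.ext_iff]

theorem mem_supp_iff_of_mem {c : (fiberCliques g).ConnectedComponent} {u v : V}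
    (hv : v ∈ c.supp) : u ∈ c.supp ↔ g u = g v := by
  rw [ConnectedComponent.mem_supp_iff] at hv ⊢
  rw [← hv, ConnectedComponent.eq, reachable_iff]

theorem cCount_induce_compl_one_le [Finite V] (hg : ∀ v, ∃ u ≠ v, g u = g v) (X : Set V) :
    cCount ((fiberCliques g).induce Xᶜ) 1 ≤ X.ncard := by
  rw [induce_eq]
  have hpartner : ∀ c : {c : (fiberCliques (g ∘ (↑) : ↥Xᶜ → W)).ConnectedComponent //
      Nat.card c.supp = 1}, ∃ x : X, ∃ v ∈ c.1.supp, g x = g v := by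
    rintro ⟨c, hc⟩
    obtain ⟨v, hv⟩ := Set.ncard_eq_one.1 ((Nat.card_coe_set_eq _).symm.trans hc)
    obtain ⟨u, huv, hgu⟩ := hg v
    refine ⟨⟨u, by_contra fun hu => huv ?_⟩, v, hv ▸ rfl, hgu⟩
    have hmem : (⟨u, hu⟩ : ↥Xᶜ) ∈ c.supp := (mem_supp_iff_of_mem (hv ▸ rfl)).2 hgu
    rw [hv] at hmem
    exact congrArg Subtype.val hmem
  choose x v hv hxv using hpartner
  have hinj : Function.Injective x := by
    intro c c' h
    have hmem : v c' ∈ c.1.supp := (mem_supp_iff_of_mem (hv c)).2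
      ((hxv c').symm.trans (h ▸ hxv c))
    exact Subtype.ext (hmem.symm.trans (hv c'))
  exact (Nat.card_le_card_of_injective x hinj).trans (Nat.card_coe_set_eq X).le

theorem cCount_induce_compl_three_le_one {w : W}
    (hg : ∀ a b c, a ≠ b → a ≠ c → b ≠ c → g a = g b → g a = g c → g a = w) (X : Set V) :
    cCount ((fiberCliques g).induce Xᶜ) 3 ≤ 1 := by
  rw [induce_eq]
  have hval : ∀ c : (fiberCliques (g ∘ (↑) : ↥Xᶜ → W)).ConnectedComponent,
      Nat.card c.supp = 3 → ∃ v ∈ c.supp, g v = w := by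
    intro c hc
    obtain ⟨a, b, d, hab, had, hbd, hsupp⟩ :=
      Set.ncard_eq_three.1 ((Nat.card_coe_set_eq _).symm.trans hc)
    have ha : a ∈ c.supp := by simp [hsupp]
    refine ⟨a, ha, hg a b d (Subtype.val_injective.ne hab) (Subtype.val_injective.ne had)
      (Subtype.val_injective.ne hbd) ?_ ?_⟩ <;>
      exact ((mem_supp_iff_of_mem ha).1 (by simp [hsupp])).symm
  have : Subsingleton {c : (fiberCliques (g ∘ (↑) : ↥Xᶜ → W)).ConnectedComponent //
      Nat.card c.supp = 3} := by
    refine ⟨fun ⟨c, hc⟩ ⟨c', hc'⟩ => Subtype.ext ?_⟩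
    obtain ⟨v, hv, hvw⟩ := hval c hc
    obtain ⟨v', hv', hv'w⟩ := hval c' hc'
    have hmem : v' ∈ c.supp := (mem_supp_iff_of_mem hv).2 (hv'w.trans hvw.symm)
    exact hmem.symm.trans hv'
  exact Finite.card_le_one_iff_subsingleton.2 this

end fiberCliques

end SimpleGraph

/-- Truncated subtraction puts `0` into block `0`, so the blocks are `{0, 1, 2}, {3, 4}, …`. -/
def block (i : ℕ) : ℕ := (i - 1) / 2

theorem block_eq_zero_of_three {a b c : ℕ} (hab : a ≠ b) (hac : a ≠ c) (hbc : b ≠ c)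
    (hb : block a = block b) (hc : block a = block c) : block a = 0 := by
  unfold block at *
  omega

theorem exists_ne_block_eq {n : ℕ} (i : Fin (2 * n + 3)) : ∃ j ≠ i, block j = block i := by
  obtain ⟨j, hj, hji, hblock⟩ : ∃ j < 2 * n + 3, j ≠ i ∧ block j = block i := by
    unfold block
    by_cases h0 : (i : ℕ) = 0
    · exact ⟨1, by omega, by omega, by omega⟩
    by_cases hodd : (i : ℕ) % 2 = 1
    · exact ⟨i + 1, by omega, by omega, by omega⟩
    · exact ⟨i - 1, by omega, by omega, by omega⟩
  exact ⟨⟨j, hj⟩, fun h => hji (congrArg Fin.val h), hblock⟩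

theorem ncard_block_eq_zero (n : ℕ) : {i : Fin (2 * n + 3) | block i = 0}.ncard = 3 := by
  refine Set.ncard_eq_three.2 ⟨⟨0, by omega⟩, ⟨1, by omega⟩, ⟨2, by omega⟩, by simp, by simp,
    by simp, ?_⟩
  ext ⟨i, hi⟩
  simp only [block, Set.mem_ofPred_eq, Set.mem_insert_iff, Set.mem_singleton_iff, Fin.ext_iff]
  omega

/-- there are infinitely many graphs without a `{P₂, P₅}`-factor
satisfying `c₁(G−X) + (2/3)c₃(G−X) ≤ (4/3)|X| + 2/3` for all `X`. -/
theorem stmt13 :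
    ∀ N : ℕ, ∃ m, N ≤ m ∧ ∃ G : SimpleGraph (Fin m),
      ¬ HasPathFamilyFactor G {2, 5} ∧
      ∀ X : Set (Fin m),
        (cCount (SimpleGraph.induce Xᶜ G) 1 : ℚ) +
            (2 / 3) * cCount (SimpleGraph.induce Xᶜ G) 3 ≤ (4 / 3) * X.ncard + 2 / 3 := by
  intro N
  refine ⟨2 * N + 3, by omega, fiberCliques (fun i => block i), ?_, fun X => ?_⟩
  · exact not_hasPathFamilyFactor_two_five (ncard_block_eq_zero N)
      fun _ _ huv hu => (fiberCliques.adj_iff.1 huv).2.symm.trans hu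
  · have hc1 := fiberCliques.cCount_induce_compl_one_le exists_ne_block_eq X
    have hc3 := fiberCliques.cCount_induce_compl_three_le_one (w := 0)
      (fun _ _ _ hab hac hbc => block_eq_zero_of_three (Fin.val_injective.ne hab)
        (Fin.val_injective.ne hac) (Fin.val_injective.ne hbc)) X
    qify at hc1 hc3
    have hX : (0 : ℚ) ≤ X.ncard := Nat.cast_nonneg _
    linarith
end

section
/- Let X ⊆ V(G) for a path Q of order 7 (a graph isomorphic to P7). Then c1(Q−X) + (2/3)·c3(Q−X) ≤ (4/3)·|V(Q) ∩ X|. -/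
/-!
Every component of `Q − X` is an interval of the path, and the vertex just after its last vertex
lies in `X` unless that last vertex is the end of `Q`; so `Q − X` has at most `|X| + 1` components.
A component of order `s ≤ 7` satisfies `s + 6[s = 1] + 4[s = 3] ≤ 7`. Summing over components,
whose orders add up to `7 − |X|`, gives `7 − |X| + 6c₁ + 4c₃ ≤ 7(|X| + 1)`, i.e.
`3c₁ + 2c₃ ≤ 4|X|`.
-/

open SimpleGraph

theorem cCount_eq_sum_ite {V : Type*} (G : SimpleGraph V)
    [Fintype G.ConnectedComponent] (i : ℕ) :
    cCount G i = ∑ c : G.ConnectedComponent, if Nat.card c.supp = i then 1 else 0 := by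
  classical
  rw [cCount, Nat.card_eq_fintype_card, Fintype.card_subtype, Finset.card_filter]

namespace SimpleGraph

variable {V : Type*}

theorem sum_natCard_connectedComponent_supp [Finite V] (G : SimpleGraph V)
    [Fintype G.ConnectedComponent] :
    ∑ c : G.ConnectedComponent, Nat.card c.supp = Nat.card V := by
  rw [← Nat.card_sigma]
  exact Nat.card_congr (Equiv.sigmaFiberEquiv G.connectedComponentMk)

variable {n : ℕ} {X : Set (Fin n)}

theorem succ_mem_of_supp_le {c : ((pathGraph n).induce Xᶜ).ConnectedComponent}
    {v : ↥Xᶜ} (hv : v ∈ c.supp) (hmax : ∀ w ∈ c.supp, (w : Fin n) ≤ v)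
    (hlt : (v : ℕ) + 1 < n) : (⟨v + 1, hlt⟩ : Fin n) ∈ X := by
  by_contra hX
  let w : ↥Xᶜ := ⟨⟨v + 1, hlt⟩, hX⟩
  have hadj : ((pathGraph n).induce Xᶜ).Adj v w := by simp [pathGraph_adj, w]
  have hw : w ∈ c.supp := by
    rw [ConnectedComponent.mem_supp_iff] at hv ⊢
    rw [← hv, ConnectedComponent.connectedComponentMk_eq_of_adj hadj]
  simpa [w, Fin.le_def] using hmax w hw

theorem natCard_connectedComponent_induce_compl_pathGraph_le (X : Set (Fin n)) :
    Nat.card ((pathGraph n).induce Xᶜ).ConnectedComponent ≤ X.ncard + 1 := by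
  have htop (c : ((pathGraph n).induce Xᶜ).ConnectedComponent) :
      ∃ v ∈ c.supp, ∀ w ∈ c.supp, (w : Fin n) ≤ v :=
    c.supp.exists_max_image _ c.supp.toFinite c.nonempty_supp
  choose top htop_mem htop_max using htop
  let S : Set (Fin (n + 1)) := Fin.castSucc '' X ∪ {Fin.last n}
  have hS (c) : (top c : Fin n).succ ∈ S := by
    by_cases hlt : (top c : ℕ) + 1 < n
    · exact .inl ⟨_, succ_mem_of_supp_le (htop_mem c) (htop_max c) hlt, rfl⟩
    · exact .inr (Fin.ext (by simp; omega))
  have hinj : Function.Injective fun c => (⟨_, hS c⟩ : S) := by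
    intro c c' h
    have : top c = top c' := Subtype.ext (Fin.succ_injective _ (congrArg Subtype.val h))
    rw [← (c.mem_supp_iff _).mp (htop_mem c), ← (c'.mem_supp_iff _).mp (htop_mem c'), this]
  calc Nat.card _ ≤ Nat.card S := Nat.card_le_card_of_injective _ hinj
    _ = S.ncard := Nat.card_coe_set_eq S
    _ ≤ (Fin.castSucc '' X).ncard + ({Fin.last n} : Set _).ncard := Set.ncard_union_le _ _
    _ = X.ncard + 1 := by
      rw [Set.ncard_image_of_injective _ (Fin.castSucc_injective n), Set.ncard_singleton]

end SimpleGraph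

/-- for the path `Q` of order `7` and any `X ⊆ V(Q)`,
`c₁(Q−X) + (2/3)c₃(Q−X) ≤ (4/3)|V(Q) ∩ X|`. -/
theorem stmt14 (X : Set (Fin 7)) :
    (cCount (SimpleGraph.induce Xᶜ (SimpleGraph.pathGraph 7)) 1 : ℚ) +
        (2 / 3) * cCount (SimpleGraph.induce Xᶜ (SimpleGraph.pathGraph 7)) 3 ≤
      (4 / 3) * X.ncard := by
  classical
  let H := (pathGraph 7).induce Xᶜ
  have hcomp : Fintype.card H.ConnectedComponent ≤ X.ncard + 1 := by
    simpa only [Nat.card_eq_fintype_card] using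
      natCard_connectedComponent_induce_compl_pathGraph_le X
  have hvert : Nat.card (↥Xᶜ) + X.ncard = 7 := by
    rw [Nat.card_coe_set_eq, add_comm, Set.ncard_add_ncard_compl, Nat.card_eq_fintype_card,
      Fintype.card_fin]
  have hweight (c : H.ConnectedComponent) :
      Nat.card c.supp + 6 * (if Nat.card c.supp = 1 then 1 else 0) +
        4 * (if Nat.card c.supp = 3 then 1 else 0) ≤ 7 := by
    have : Nat.card c.supp ≤ Nat.card (↥Xᶜ) := Finite.card_subtype_le _
    split_ifs <;> omega
  have hsum := Finset.sum_le_sum fun c (_ : c ∈ Finset.univ) => hweight c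
  simp only [Finset.sum_add_distrib, ← Finset.mul_sum, Finset.sum_const, Finset.card_univ,
    smul_eq_mul, ← cCount_eq_sum_ite, sum_natCard_connectedComponent_supp] at hsum
  have : (3 * cCount H 1 + 2 * cCount H 3 : ℚ) ≤ 4 * X.ncard := by
    exact_mod_cast (by omega : 3 * cCount H 1 + 2 * cCount H 3 ≤ 4 * X.ncard)
  linarith
end

section
/- Let G be a graph obtained as the join R0 + (R1 ∪ … ∪ R_{2n+1}), where R0 is a complete graph of order n and each R_i (1 ≤ i ≤ 2n+1) has order 2k+1, contains no path of order 2k+1, and hence has no {P2,P_{2k+1}}-factor. Then G has no {P2,P_{2k+1}}-factor. -/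
open SimpleGraph

/-- The join of a complete graph of order `n` with the disjoint union of the graphs
`R i` (`i < 2n+1`), each on `2k+1` vertices. -/
def joinGraph (n k : ℕ) (R : Fin (2 * n + 1) → SimpleGraph (Fin (2 * k + 1))) :
    SimpleGraph (Fin n ⊕ Fin (2 * n + 1) × Fin (2 * k + 1)) :=
  SimpleGraph.fromRel (fun u v =>
    (∃ a b : Fin n, u = Sum.inl a ∧ v = Sum.inl b) ∨
    (∃ (a : Fin n) (p : Fin (2 * n + 1) × Fin (2 * k + 1)), u = Sum.inl a ∧ v = Sum.inr p) ∨
    (∃ (i : Fin (2 * n + 1)) (x y : Fin (2 * k + 1)),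
      u = Sum.inr (i, x) ∧ v = Sum.inr (i, y) ∧ (R i).Adj x y))

/-!
If some part `R i` sent no factor edge to the clique `R₀`, the part would be a union of factor
components; having odd order `2k+1`, it would contain a component of odd order, i.e. a copy of
`P_{2k+1}` inside `R i`, which is excluded. So each of the `2n+1` parts has a factor edge to one
of the `n` clique vertices, and by pigeonhole some clique vertex has three factor neighbours,
impossible in a path.
-/

namespace SimpleGraph

variable {V W : Type*} {F : SimpleGraph V}

lemma Reachable.mem_of_forall_adj_mem {S : Set V} (hS : ∀ ⦃u v⦄, u ∈ S → F.Adj u v → v ∈ S)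
    {u v : V} (h : F.Reachable u v) (hu : u ∈ S) : v ∈ S := by
  obtain ⟨p⟩ := h
  induction p with
  | nil => exact hu
  | cons huv _ ih => exact ih (hS hu huv)

lemma exists_mem_oddComponents_supp_subset [Finite V] {S : Set V}
    (hS : ∀ ⦃u v⦄, u ∈ S → F.Adj u v → v ∈ S) (hodd : Odd S.ncard) :
    ∃ c ∈ F.oddComponents, c.supp ⊆ S := by
  -- `S` is a connected component of the graph joining any two vertices on the same side of `S`.
  let G' : SimpleGraph V := fromRel fun u v => (u ∈ S ↔ v ∈ S)
  have hle : F ≤ G' := fun u v h => ⟨h.ne, .inl ⟨fun hu => hS hu h, fun hv => hS hv h.symm⟩⟩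
  obtain ⟨v, hv⟩ := Set.nonempty_of_ncard_ne_zero hodd.pos.ne'
  have hsupp : (G'.connectedComponentMk v).supp = S := by
    ext w
    rw [ConnectedComponent.mem_supp_iff, ConnectedComponent.eq]
    refine ⟨fun h => h.symm.mem_of_forall_adj_mem (fun u w hu huw => ?_) hv, fun hw => ?_⟩
    · exact huw.2.elim (fun h => h.1 hu) (fun h => h.2 hu)
    · rcases eq_or_ne w v with rfl | hwv
      · rfl
      · exact Adj.reachable (G := G') ⟨hwv, Or.inl ⟨fun _ => hv, fun _ => hw⟩⟩
  have hcount := (ConnectedComponent.odd_oddComponents_ncard_subset_supp F hle _).mpr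
    (hsupp ▸ hodd)
  obtain ⟨c, hc, hsub⟩ := Set.nonempty_of_ncard_ne_zero hcount.pos.ne'
  exact ⟨c, hc, hsupp ▸ hsub⟩

namespace IsPathComp

variable {m : ℕ} {c : F.ConnectedComponent}

lemma ncard_supp (hc : IsPathComp F m c) : c.supp.ncard = m := by
  obtain ⟨e⟩ := hc
  rw [← Nat.card_coe_set_eq, Nat.card_congr e.toEquiv, Nat.card_eq_fintype_card,
    Fintype.card_fin]

lemma eq_or_eq_or_eq_of_adj {v w₁ w₂ w₃ : V} (hc : IsPathComp F m (F.connectedComponentMk v))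
    (h₁ : F.Adj v w₁) (h₂ : F.Adj v w₂) (h₃ : F.Adj v w₃) :
    w₁ = w₂ ∨ w₁ = w₃ ∨ w₂ = w₃ := by
  obtain ⟨e⟩ := hc
  have hmem : ∀ {w}, F.Adj v w → w ∈ (F.connectedComponentMk v).supp := fun h =>
    ConnectedComponent.sound h.symm.reachable
  let ι : ∀ {w}, F.Adj v w → ℕ := fun h => e ⟨_, hmem h⟩
  have hι : ∀ {w} (h : F.Adj v w), ι h + 1 = e ⟨v, rfl⟩ ∨ (e ⟨v, rfl⟩ : ℕ) + 1 = ι h :=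
    fun h => pathGraph_adj.mp (e.map_rel_iff.mpr h.symm)
  have hinj : ∀ {w w'} (h : F.Adj v w) (h' : F.Adj v w'), ι h = ι h' → w = w' :=
    fun _ _ he => congrArg Subtype.val (e.injective (Fin.ext he))
  -- three distinct values `ι hᵢ` cannot fit in `{e v - 1, e v + 1}`
  by_contra! hne
  have := hι h₁; have := hι h₂; have := hι h₃
  have := mt (hinj h₁ h₂) hne.1; have := mt (hinj h₁ h₃) hne.2.1; have := mt (hinj h₂ h₃) hne.2.2
  omega

lemma exists_injective_hom {H : SimpleGraph W} (hc : IsPathComp F m c) (φ : W → V)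
    (hsub : c.supp ⊆ Set.range φ) (hφ : ∀ x y, F.Adj (φ x) (φ y) → H.Adj x y) :
    ∃ f : Fin m → W, Function.Injective f ∧ ∀ a b, (pathGraph m).Adj a b → H.Adj (f a) (f b) := by
  obtain ⟨e⟩ := hc
  choose f hf using fun a => hsub (e.symm a).2
  refine ⟨f, fun a b hab => e.symm.injective (Subtype.ext ?_), fun a b hab => hφ _ _ ?_⟩
  · rw [← hf a, ← hf b, hab]
  · rw [hf a, hf b]
    exact e.symm.map_rel_iff.mpr hab

end IsPathComp

end SimpleGraph

section joinGraph

variable {n k : ℕ} {R : Fin (2 * n + 1) → SimpleGraph (Fin (2 * k + 1))}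

@[simp]
lemma joinGraph_adj_inr_inr {i j : Fin (2 * n + 1)} {x y : Fin (2 * k + 1)} :
    (joinGraph n k R).Adj (.inr (i, x)) (.inr (j, y)) ↔ i = j ∧ (R i).Adj x y := by
  simp only [joinGraph, fromRel_adj]
  constructor
  · rintro ⟨-, h | h⟩ <;> aesop (add safe Adj.symm)
  · rintro ⟨rfl, h⟩
    exact ⟨by simpa using h.ne, .inl (.inr (.inr ⟨i, x, y, rfl, rfl, h⟩))⟩

lemma exists_adj_inl_of_isPathComp {F : SimpleGraph (Fin n ⊕ Fin (2 * n + 1) × Fin (2 * k + 1))}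
    (hF : F ≤ joinGraph n k R) (hcomp : ∀ c, ∃ m ∈ ({2, 2 * k + 1} : Set ℕ), IsPathComp F m c)
    (i : Fin (2 * n + 1))
    (hnopath : ¬ ∃ f : Fin (2 * k + 1) → Fin (2 * k + 1), Function.Injective f ∧
      ∀ a b, (pathGraph (2 * k + 1)).Adj a b → (R i).Adj (f a) (f b)) :
    ∃ x a, F.Adj (.inr (i, x)) (.inl a) := by
  by_contra! hno
  let φ : Fin (2 * k + 1) → Fin n ⊕ Fin (2 * n + 1) × Fin (2 * k + 1) := fun x => .inr (i, x)
  have hφ : Function.Injective φ := fun x y h => by simpa [φ] using h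
  have hclosed : ∀ ⦃u v⦄, u ∈ Set.range φ → F.Adj u v → v ∈ Set.range φ := by
    rintro _ (v | ⟨j, y⟩) ⟨x, rfl⟩ h
    · exact absurd h (hno x v)
    · obtain ⟨rfl, -⟩ := joinGraph_adj_inr_inr.mp (hF h)
      exact ⟨y, rfl⟩
  have hodd : Odd (Set.range φ).ncard := by
    rw [Set.ncard_range_of_injective hφ, Nat.card_eq_fintype_card, Fintype.card_fin]
    exact odd_two_mul_add_one k
  obtain ⟨c, hc, hsub⟩ := exists_mem_oddComponents_supp_subset hclosed hodd
  obtain ⟨m, hm, hpath⟩ := hcomp c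
  obtain rfl : m = 2 * k + 1 := by
    rcases hm with rfl | rfl
    · exact absurd (hpath.ncard_supp ▸ hc : Odd 2) (by decide)
    · rfl
  exact hnopath (hpath.exists_injective_hom φ hsub fun x y h => (joinGraph_adj_inr_inr.mp (hF h)).2)

end joinGraph

theorem stmt16_general (n k : ℕ) (R : Fin (2 * n + 1) → SimpleGraph (Fin (2 * k + 1)))
    (hnopath : ∀ i, ¬ ∃ f : Fin (2 * k + 1) → Fin (2 * k + 1), Function.Injective f ∧
      ∀ a b, (SimpleGraph.pathGraph (2 * k + 1)).Adj a b → (R i).Adj (f a) (f b)) :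
    ¬ HasPathFamilyFactor (joinGraph n k R) {2, 2 * k + 1} := by
  rintro ⟨F, hF, hcomp⟩
  choose x a hxa using fun i => exists_adj_inl_of_isPathComp hF hcomp i (hnopath i)
  obtain ⟨a₀, ha₀⟩ := Fintype.exists_lt_card_fiber_of_mul_lt_card a (n := 2) (by simp only [Fintype.card_fin]; omega)
  obtain ⟨i₁, hi₁, i₂, hi₂, i₃, hi₃, h₁₂, h₁₃, h₂₃⟩ := Finset.two_lt_card.mp ha₀
  simp only [Finset.mem_filter, Finset.mem_univ, true_and] at hi₁ hi₂ hi₃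
  obtain ⟨m, -, hpath⟩ := hcomp (F.connectedComponentMk (.inl a₀))
  have hadj : ∀ i, a i = a₀ → F.Adj (.inl a₀) (.inr (i, x i)) := fun i hi => hi ▸ (hxa i).symm
  rcases hpath.eq_or_eq_or_eq_of_adj (hadj i₁ hi₁) (hadj i₂ hi₂) (hadj i₃ hi₃) with h | h | h <;>
    simp_all

/-- if no `R i` contains a path of order `2k+1` (hence none has a
`{P₂, P_{2k+1}}`-factor), then the join graph has no `{P₂, P_{2k+1}}`-factor. -/
theorem stmt16 (n k : ℕ) (R : Fin (2 * n + 1) → SimpleGraph (Fin (2 * k + 1)))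
    (hnopath : ∀ i, ¬ ∃ f : Fin (2 * k + 1) → Fin (2 * k + 1), Function.Injective f ∧
      ∀ a b, (SimpleGraph.pathGraph (2 * k + 1)).Adj a b → (R i).Adj (f a) (f b))
    (hnofactor : ∀ i, ¬ HasPathFamilyFactor (R i) {2, 2 * k + 1}) :
    ¬ HasPathFamilyFactor (joinGraph n k R) {2, 2 * k + 1} :=
  stmt16_general n k R hnopath
end

section
/- Let k = 3m with m ≥ 1, and let R be the graph obtained from a complete graph K of order 2m−1 by taking the disjoint union of 2m+1 paths of order 2 and joining every vertex of these paths to all vertices of K. Then |V(R)| = 2k+1 and R contains no spanning path; moreover R has no {P2,P_{2k+1}}-factor, and for every X ⊆ V(R), c1(R−X) + c3(R−X) + c5(R−X) + … + c_{2k−1}(R−X) ≤ ((4k+6)/(8k+3))·|X| + (2k+3)/(8k+3). -/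
open SimpleGraph

/-- The graph `R`: a complete graph on `2m−1` vertices joined completely to the
disjoint union of `2m+1` paths of order `2`. -/
def Rgraph (m : ℕ) : SimpleGraph (Fin (2 * m - 1) ⊕ Fin (2 * m + 1) × Fin 2) :=
  SimpleGraph.fromRel (fun u v =>
    (∃ a b : Fin (2 * m - 1), u = Sum.inl a ∧ v = Sum.inl b) ∨
    (∃ (a : Fin (2 * m - 1)) (p : Fin (2 * m + 1) × Fin 2), u = Sum.inl a ∧ v = Sum.inr p) ∨
    (∃ (i : Fin (2 * m + 1)) (x y : Fin 2), u = Sum.inr (i, x) ∧ v = Sum.inr (i, y)))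

/-!
Deleting the clique `K` (`2m − 1` vertices) from `R` leaves only the `2m + 1` edges of the
`P₂`'s; as each clique vertex meets at most two edges of a path, a path in `R` has at most
`2|K| + 2m + 1 = 6m − 1` edges, one fewer than a spanning path of the `6m + 1` vertices needs.
A `{P₂, P_{2k+1}}`-factor therefore consists of `P₂`'s only, which the odd order of `R` forbids.

For the counting inequality, if a clique vertex survives in `R − X` it is adjacent to
everything, so `R − X` is connected and contributes an odd component of order `< 2k` only
when `|X| ≥ 2`. Otherwise `K ⊆ X`, each component of `R − X` lies in one `P₂`, and an odd
one is a single vertex whose partner is in `X`; distinct such components have distinct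
`P₂`'s, so their number `c` satisfies `c ≤ 2m + 1` and `2m − 1 + c ≤ |X|`, and the bound
follows.
-/

namespace SimpleGraph

variable {V : Type*} {G : SimpleGraph V}

theorem le_two_mul_ncard_add_ncard_edgeSet_of_path [Finite V] (S : Set V)
    {n : ℕ} (f : Fin (n + 1) → V) (hf : Function.Injective f)
    (hadj : ∀ a b, (pathGraph (n + 1)).Adj a b → G.Adj (f a) (f b)) :
    n ≤ 2 * S.ncard + {e ∈ G.edgeSet | ∀ v ∈ e, v ∉ S}.ncard := by
  classical
  set E := {e ∈ G.edgeSet | ∀ v ∈ e, v ∉ S}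
  have hstep (t : Fin n) : G.Adj (f t.castSucc) (f t.succ) := hadj _ _ (by simp [pathGraph_adj])
  -- charge the edge `t` to its first endpoint if that lies in `S`, else to its second endpoint
  -- if that does, else to itself; since `f` is injective no label is used twice
  let label (t : Fin n) : S × Fin 2 ⊕ E :=
    if h : f t.castSucc ∈ S then .inl (⟨_, h⟩, 0)
    else if h' : f t.succ ∈ S then .inl (⟨_, h'⟩, 1)
    else .inr ⟨s(f t.castSucc, f t.succ), hstep t, by simp [h, h']⟩
  have hlabel : Function.Injective label := by
    intro t t' h
    simp only [label] at h
    split_ifs at h <;> simp_all [Fin.ext_iff, hf.eq_iff]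
    omega
  simpa [Nat.card_sum, Nat.card_prod, Nat.card_coe_set_eq, mul_comm] using
    Nat.card_le_card_of_injective label hlabel

theorem IsPathComp.ncard_supp_s17 {n : ℕ} {c : G.ConnectedComponent} (h : IsPathComp G n c) :
    c.supp.ncard = n := by
  obtain ⟨e⟩ := h
  simpa [Nat.card_coe_set_eq] using Nat.card_congr e.toEquiv

theorem IsPathComp.exists_path {F : SimpleGraph V} {n : ℕ} {c : F.ConnectedComponent}
    (h : IsPathComp F n c) (hFG : F ≤ G) :
    ∃ f : Fin n → V, Function.Injective f ∧
      ∀ a b, (pathGraph n).Adj a b → G.Adj (f a) (f b) := by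
  obtain ⟨e⟩ := h
  exact ⟨fun t => e.symm t, Subtype.val_injective.comp e.symm.injective,
    fun a b hab => hFG (e.symm.map_rel_iff.mpr hab)⟩

theorem exists_path_of_hasPathFamilyFactor [Finite V] (hV : Odd (Nat.card V)) {n : ℕ}
    (h : HasPathFamilyFactor G {2, n}) :
    ∃ f : Fin n → V, Function.Injective f ∧
      ∀ a b, (pathGraph n).Adj a b → G.Adj (f a) (f b) := by
  obtain ⟨F, hFG, hF⟩ := h
  by_contra hno
  have hall : ∀ c : F.ConnectedComponent, c.supp.ncard = 2 := by
    intro c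
    obtain ⟨l, hl, hc⟩ := hF c
    rcases hl with rfl | rfl
    · exact hc.ncard_supp_s17
    · exact absurd (hc.exists_path hFG) hno
  have hnone : F.oddComponents = ∅ := by
    ext c
    simp [hall c]
  have hodd := F.odd_ncard_oddComponents.mpr hV
  rw [hnone, Set.ncard_empty] at hodd
  exact Nat.not_odd_zero hodd

theorem cCount_eq_ncard (H : SimpleGraph V) (j : ℕ) :
    cCount H j = {c : H.ConnectedComponent | c.supp.ncard = j}.ncard := by
  simp only [cCount, Nat.card_coe_set_eq]
  rfl

theorem sum_range_cCount_odd [Finite V] (H : SimpleGraph V) (k : ℕ) :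
    ∑ i ∈ Finset.range k, cCount H (2 * i + 1) =
      {c : H.ConnectedComponent | Odd c.supp.ncard ∧ c.supp.ncard < 2 * k}.ncard := by
  induction k with
  | zero => simp
  | succ k ih =>
    rw [Finset.sum_range_succ, ih, cCount_eq_ncard, ← Set.ncard_union_eq]
    · congr 1
      ext c
      simp only [Set.mem_ofPred_eq, Set.mem_union, Nat.odd_iff]
      omega
    · rw [Set.disjoint_left]
      rintro c ⟨-, hc⟩ hc'
      simp only [Set.mem_ofPred_eq] at hc'
      omega

theorem preconnected_of_forall_adj (v : V) (h : ∀ w, w ≠ v → G.Adj v w) : G.Preconnected := by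
  have hv (w : V) : G.Reachable v w := by
    by_cases hw : w = v
    · exact hw ▸ Reachable.rfl
    · exact (h w hw).reachable
  exact fun u w => (hv u).symm.trans (hv w)

theorem Preconnected.ncard_supp_s17 (hG : G.Preconnected) (c : G.ConnectedComponent) :
    c.supp.ncard = Nat.card V := by
  have := hG.subsingleton_connectedComponent
  rw [← Set.ncard_univ]
  exact congrArg _ (Set.eq_univ_of_forall fun v => Subsingleton.elim _ _)

theorem Reachable.apply_eq_of_forall_adj {β : Sort*} {f : V → β}
    (hf : ∀ u v, G.Adj u v → f u = f v) {u v : V} (h : G.Reachable u v) : f u = f v := by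
  obtain ⟨p⟩ := h
  induction p with
  | nil => rfl
  | cons hadj _ ih => exact (hf _ _ hadj).trans ih

end SimpleGraph

section Rgraph

variable {m : ℕ} {X : Set (Fin (2 * m - 1) ⊕ Fin (2 * m + 1) × Fin 2)}

theorem Rgraph_adj_inl {a : Fin (2 * m - 1)} {w : Fin (2 * m - 1) ⊕ Fin (2 * m + 1) × Fin 2}
    (h : Sum.inl a ≠ w) : (Rgraph m).Adj (Sum.inl a) w := by
  rw [Rgraph, fromRel_adj]
  refine ⟨h, Or.inl ?_⟩
  rcases w with b | p
  · exact Or.inl ⟨a, b, rfl, rfl⟩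
  · exact Or.inr (Or.inl ⟨a, p, rfl, rfl⟩)

theorem Rgraph_adj_inr_inr {i j : Fin (2 * m + 1)} {x y : Fin 2} :
    (Rgraph m).Adj (Sum.inr (i, x)) (Sum.inr (j, y)) ↔ i = j ∧ x ≠ y := by
  rw [Rgraph, fromRel_adj]
  constructor
  · rintro ⟨hne, h | h⟩ <;> aesop
  · rintro ⟨rfl, hxy⟩
    exact ⟨by simp [hxy], Or.inl (Or.inr (Or.inr ⟨i, x, y, rfl, rfl⟩))⟩

theorem Rgraph_card (hm : 1 ≤ m) :
    Nat.card (Fin (2 * m - 1) ⊕ Fin (2 * m + 1) × Fin 2) = 6 * m + 1 := by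
  rw [Nat.card_eq_fintype_card]
  simp only [Fintype.card_sum, Fintype.card_prod, Fintype.card_fin]
  omega

theorem ncard_edgeSet_Rgraph_off_clique_le :
    {e ∈ (Rgraph m).edgeSet | ∀ v ∈ e, v ∉ Set.range Sum.inl}.ncard ≤ 2 * m + 1 := by
  have hsub : {e ∈ (Rgraph m).edgeSet | ∀ v ∈ e, v ∉ Set.range Sum.inl} ⊆
      Set.range fun i => s(Sum.inr (i, 0), Sum.inr (i, 1)) := by
    rintro e ⟨he, hK⟩
    induction e using Sym2.ind with | h u v => ?_
    rcases u with a | ⟨i, x⟩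
    · exact absurd ⟨a, rfl⟩ (hK _ (Sym2.mem_mk_left _ _))
    rcases v with b | ⟨j, y⟩
    · exact absurd ⟨b, rfl⟩ (hK _ (Sym2.mem_mk_right _ _))
    obtain ⟨rfl, hxy⟩ := Rgraph_adj_inr_inr.mp he
    refine ⟨i, ?_⟩
    fin_cases x <;> fin_cases y <;> simp_all [Sym2.eq_swap]
  calc _ ≤ _ := Set.ncard_le_ncard hsub
    _ ≤ Nat.card (Fin (2 * m + 1)) := by
      rw [← Set.image_univ]
      exact (Set.ncard_image_le Set.finite_univ).trans (Set.ncard_univ _).le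
    _ = 2 * m + 1 := Nat.card_fin _

theorem Rgraph_path_card_le (hm : 1 ≤ m) {n : ℕ}
    (f : Fin (n + 1) → Fin (2 * m - 1) ⊕ Fin (2 * m + 1) × Fin 2) (hf : Function.Injective f)
    (hadj : ∀ a b, (pathGraph (n + 1)).Adj a b → (Rgraph m).Adj (f a) (f b)) :
    n + 1 ≤ 6 * m := by
  have hpath := le_two_mul_ncard_add_ncard_edgeSet_of_path (Set.range Sum.inl) f hf hadj
  rw [Set.ncard_range_of_injective Sum.inl_injective, Nat.card_fin] at hpath
  have := ncard_edgeSet_Rgraph_off_clique_le (m := m)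
  omega

theorem preconnected_induce_Rgraph_of_inl_notMem {a : Fin (2 * m - 1)} (ha : Sum.inl a ∉ X) :
    ((Rgraph m).induce Xᶜ).Preconnected :=
  preconnected_of_forall_adj ⟨_, ha⟩ fun _ hw => Rgraph_adj_inl fun h => hw (Subtype.ext h.symm)

def matchingCoord (m : ℕ) :
    Fin (2 * m - 1) ⊕ Fin (2 * m + 1) × Fin 2 → Fin (2 * m + 1) × Fin 2 :=
  Sum.elim (fun _ => 0) id

theorem exists_eq_inr_of_notMem (hK : ∀ a, Sum.inl a ∈ X) {v} (hv : v ∉ X) :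
    ∃ p, v = Sum.inr p := by
  rcases v with a | p
  · exact absurd (hK a) hv
  · exact ⟨p, rfl⟩

theorem ncard_supp_induce_Rgraph_le_two (hK : ∀ a, Sum.inl a ∈ X)
    (c : ((Rgraph m).induce Xᶜ).ConnectedComponent) : c.supp.ncard ≤ 2 := by
  obtain ⟨v, rfl⟩ := c.exists_rep
  have hidx {w} (hw : w ∈ (((Rgraph m).induce Xᶜ).connectedComponentMk v).supp) :
      (matchingCoord m w).1 = (matchingCoord m v).1 := by
    refine Reachable.apply_eq_of_forall_adj (f := fun u : ↥Xᶜ => (matchingCoord m u).1)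
      (fun u u' huu' => ?_) (ConnectedComponent.exact hw)
    obtain ⟨⟨i, x⟩, hu⟩ := exists_eq_inr_of_notMem hK u.2
    obtain ⟨⟨j, y⟩, hu'⟩ := exists_eq_inr_of_notMem hK u'.2
    rw [induce_adj, hu, hu', Rgraph_adj_inr_inr] at huu'
    simp [matchingCoord, hu, hu', huu'.1]
  calc (((Rgraph m).induce Xᶜ).connectedComponentMk v).supp.ncard
        ≤ (Set.univ : Set (Fin 2)).ncard :=
        Set.ncard_le_ncard_of_injOn (fun w => (matchingCoord m w).2) (by simp) ?_
    _ = 2 := by simp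
  intro w hw w' hw' h
  obtain ⟨p, hp⟩ := exists_eq_inr_of_notMem hK w.2
  obtain ⟨q, hq⟩ := exists_eq_inr_of_notMem hK w'.2
  have h1 := (hidx hw).trans (hidx hw').symm
  simp only [matchingCoord, hp, hq, Sum.elim_inr, id] at h h1
  exact Subtype.ext (by rw [hp, hq, Prod.ext h1 h])

theorem exists_supp_eq_singleton_of_odd (hK : ∀ a, Sum.inl a ∈ X)
    (c : ((Rgraph m).induce Xᶜ).ConnectedComponent) (hc : Odd c.supp.ncard) :
    ∃ (i : Fin (2 * m + 1)) (x : Fin 2) (hx : Sum.inr (i, x) ∉ X),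
      c.supp = {⟨_, hx⟩} ∧ Sum.inr (i, x + 1) ∈ X := by
  have h1 : c.supp.ncard = 1 := by
    have := ncard_supp_induce_Rgraph_le_two hK c
    rw [Nat.odd_iff] at hc
    omega
  obtain ⟨v, hv⟩ := Set.ncard_eq_one.mp h1
  obtain ⟨⟨i, x⟩, hix⟩ := exists_eq_inr_of_notMem hK v.2
  obtain ⟨v, hvX⟩ := v
  subst hix
  refine ⟨i, x, hvX, hv, by_contra fun hpX => ?_⟩
  have hflip : ∀ y : Fin 2, y ≠ y + 1 := by decide
  have hadj : ((Rgraph m).induce Xᶜ).Adj ⟨_, hvX⟩ ⟨_, hpX⟩ :=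
    Rgraph_adj_inr_inr.mpr ⟨rfl, hflip x⟩
  have hmem := c.mem_supp_of_adj_mem_supp (hv ▸ rfl) hadj
  simp [hv] at hmem

theorem ncard_oddComponents_induce_Rgraph_le (hK : ∀ a, Sum.inl a ∈ X) :
    ((Rgraph m).induce Xᶜ).oddComponents.ncard ≤ 2 * m + 1 ∧
      2 * m - 1 + ((Rgraph m).induce Xᶜ).oddComponents.ncard ≤ X.ncard := by
  set O := ((Rgraph m).induce Xᶜ).oddComponents
  choose i x hx hsupp hpartner using fun c : O => exists_supp_eq_singleton_of_odd hK c.1 c.2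
  have hix : Function.Injective fun c => (i c, x c) := by
    intro c c' h
    simp only [Prod.mk.injEq] at h
    refine Subtype.ext (ConnectedComponent.supp_inj.mp ?_)
    rw [hsupp, hsupp]
    simp [h.1, h.2]
  have hi : Function.Injective i := by
    intro c c' h
    -- otherwise the vertex of `c'` would be the partner of that of `c`, which lies in `X`
    refine hix (Prod.ext h (by_contra fun hne => hx c' ?_))
    have hfin : ∀ y z : Fin 2, y ≠ z → z = y + 1 := by decide
    rw [← h, hfin (x c) (x c') hne]
    exact hpartner c
  have hpartner_inj : Function.Injective (Sum.elim (fun a => (⟨Sum.inl a, hK a⟩ : X))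
      fun c => ⟨Sum.inr (i c, x c + 1), hpartner c⟩) := by
    rintro (a | c) (a' | c') h <;> simp_all
    exact hix (Prod.ext h.1 h.2)
  constructor
  · have := Nat.card_le_card_of_injective i hi
    rwa [Nat.card_coe_set_eq, Nat.card_fin] at this
  · have := Nat.card_le_card_of_injective _ hpartner_inj
    rwa [Nat.card_sum, Nat.card_coe_set_eq, Nat.card_coe_set_eq, Nat.card_fin] at this

end Rgraph

-- tight at `c = 2m + 1`, `x = 4m`: `X` is the clique together with one vertex of each `P₂`
theorem le_bound_of_le_of_add_le {k m c x : ℕ} (hk : k = 3 * m) (hm : 1 ≤ m)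
    (hc : c ≤ 2 * m + 1) (hx : 2 * m - 1 + c ≤ x) :
    (c : ℚ) ≤ (4 * k + 6) / (8 * k + 3) * x + (2 * k + 3) / (8 * k + 3) := by
  subst hk
  have hc' : (c : ℚ) ≤ 2 * m + 1 := by exact_mod_cast hc
  have hx' : (2 * m - 1 + c : ℚ) ≤ x := by
    have : ((2 * m - 1 + c : ℕ) : ℚ) ≤ x := by exact_mod_cast hx
    push_cast [Nat.cast_sub (by omega : 1 ≤ 2 * m)] at this
    exact this
  have hm' : (1 : ℚ) ≤ m := by exact_mod_cast hm
  rw [div_mul_eq_mul_div, ← add_div, le_div_iff₀ (by positivity)]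
  push_cast
  nlinarith [mul_le_mul_of_nonneg_left hx' (by linarith : (0 : ℚ) ≤ 12 * m + 6),
    mul_le_mul_of_nonneg_left hc' (by linarith : (0 : ℚ) ≤ 12 * m - 3)]

theorem one_le_bound {k x : ℕ} (hx : 2 ≤ x) :
    (1 : ℚ) ≤ (4 * k + 6) / (8 * k + 3) * x + (2 * k + 3) / (8 * k + 3) := by
  have hx' : (2 : ℚ) ≤ x := by exact_mod_cast hx
  rw [div_mul_eq_mul_div, ← add_div, le_div_iff₀ (by positivity)]
  nlinarith

theorem sum_cCount_odd_induce_Rgraph_le {m : ℕ} (hm : 1 ≤ m) {k : ℕ} (hk : k = 3 * m)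
    (X : Set (Fin (2 * m - 1) ⊕ Fin (2 * m + 1) × Fin 2)) :
    (∑ i ∈ Finset.range k, (cCount ((Rgraph m).induce Xᶜ) (2 * i + 1) : ℚ)) ≤
      (4 * k + 6) / (8 * k + 3) * X.ncard + (2 * k + 3) / (8 * k + 3) := by
  rw [← Nat.cast_sum, sum_range_cCount_odd]
  set S := {c : ((Rgraph m).induce Xᶜ).ConnectedComponent |
    Odd c.supp.ncard ∧ c.supp.ncard < 2 * k}
  by_cases hK : ∀ a, Sum.inl a ∈ X
  · obtain ⟨hO, hXO⟩ := ncard_oddComponents_induce_Rgraph_le hK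
    have hSO : S.ncard ≤ ((Rgraph m).induce Xᶜ).oddComponents.ncard :=
      Set.ncard_le_ncard fun c hc => hc.1
    exact le_bound_of_le_of_add_le hk hm (hSO.trans hO) (by omega)
  obtain ⟨a, ha⟩ := not_forall.mp hK
  have hH := preconnected_induce_Rgraph_of_inl_notMem ha
  have hX := Set.ncard_add_ncard_compl X
  rw [Rgraph_card hm] at hX
  by_cases hsmall : Xᶜ.ncard < 2 * k
  · have := hH.subsingleton_connectedComponent
    exact le_trans (by exact_mod_cast Set.ncard_le_one_of_subsingleton S) (one_le_bound (by omega))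
  · have hS : S = ∅ := by
      ext c
      simp [S, hH.ncard_supp_s17 c, Nat.card_coe_set_eq, hsmall]
    rw [hS, Set.ncard_empty, Nat.cast_zero]
    positivity

/-- for `k = 3m`, `R` has order `2k+1`, contains no spanning path, has no
`{P₂, P_{2k+1}}`-factor, and satisfies the odd-component counting inequality. -/
theorem stmt17 (m : ℕ) (hm : 1 ≤ m) (k : ℕ) (hk : k = 3 * m) :
    Fintype.card (Fin (2 * m - 1) ⊕ Fin (2 * m + 1) × Fin 2) = 2 * k + 1 ∧
    (¬ ∃ f : Fin (2 * k + 1) → (Fin (2 * m - 1) ⊕ Fin (2 * m + 1) × Fin 2),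
      Function.Injective f ∧
        ∀ a b, (SimpleGraph.pathGraph (2 * k + 1)).Adj a b → (Rgraph m).Adj (f a) (f b)) ∧
    ¬ HasPathFamilyFactor (Rgraph m) {2, 2 * k + 1} ∧
    ∀ X : Set (Fin (2 * m - 1) ⊕ Fin (2 * m + 1) × Fin 2),
      (∑ i ∈ Finset.range k, (cCount (SimpleGraph.induce Xᶜ (Rgraph m)) (2 * i + 1) : ℚ)) ≤
        ((4 * k + 6) / (8 * k + 3)) * X.ncard + (2 * k + 3) / (8 * k + 3) := by
  have hcard : Fintype.card (Fin (2 * m - 1) ⊕ Fin (2 * m + 1) × Fin 2) = 2 * k + 1 := by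
    rw [← Nat.card_eq_fintype_card, Rgraph_card hm, hk]
    ring
  have hno_path : ¬ ∃ f : Fin (2 * k + 1) → (Fin (2 * m - 1) ⊕ Fin (2 * m + 1) × Fin 2),
      Function.Injective f ∧
        ∀ a b, (pathGraph (2 * k + 1)).Adj a b → (Rgraph m).Adj (f a) (f b) := by
    rintro ⟨f, hf, hadj⟩
    have := Rgraph_path_card_le hm f hf hadj
    omega
  have hodd : Odd (Nat.card (Fin (2 * m - 1) ⊕ Fin (2 * m + 1) × Fin 2)) := by
    rw [Nat.card_eq_fintype_card, hcard]
    exact odd_two_mul_add_one k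
  exact ⟨hcard, hno_path, fun h => hno_path (exists_path_of_hasPathFamilyFactor hodd h),
    sum_cCount_odd_induce_Rgraph_le hm hk⟩
end

section
/- For every integer k ≥ 3 with k ≡ 0 (mod 3), there exist infinitely many graphs G having no {P2,P_{2k+1}}-factor such that for all X ⊆ V(G), the sum over 0 ≤ i ≤ k−1 of c_{2i+1}(G−X) is at most ((4k+6)/(8k+3))·|X| + (2k+3)/(8k+3). -/
open SimpleGraph

/-!
Take `c = 2i + 1`, `p = 2i + 3`, so that `k = 3i + 3`, and let `G = (p K₂ ∨ c K₁) + K_f`; the core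
`p K₂ ∨ c K₁` is a component with `2k + 1` vertices. Since this is odd, a `{P₂, P_{2k+1}}`-factor
would contain a Hamiltonian path of the core. But every edge of a path in the core has an endpoint
among the `c` central vertices or is one of the `p` matching edges, so the path has at most
`2c + p = 2k - 1` edges.

An odd component of order less than `2k` of `G - X` is either the rest of the clique, which costs
`3` vertices of `X` once `f ≥ 2k + 2`, or lies in the core. If `X` misses both a central and a
matching vertex, the rest of the core is connected, and by parity it is small only if `X` contains
at least `2` core vertices. If `X` contains all `2p` matching vertices, counting one surviving
vertex per component suffices. If `X` contains the centre, each small odd component contains a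
surviving matching vertex whose partner lies in `X`, so there are at most
`min(|X ∩ M|, 2p - |X ∩ M|)` of them, `M` being the set of matching vertices.
-/

namespace Set

lemma ncard_preimage_val_compl {V : Type*} (X B : Set V) :
    (Subtype.val ⁻¹' B : Set ↥Xᶜ).ncard = (B \ X).ncard := by
  rw [← ncard_image_of_injective _ Subtype.val_injective, Subtype.image_preimage_coe,
    inter_comm, sdiff_eq]

end Set

namespace SimpleGraph

section Components

variable {V : Type*} {H : SimpleGraph V} {Q : Set V}

lemma Reachable.mem_of_closed (hQ : ∀ u v, H.Adj u v → u ∈ Q → v ∈ Q) {u v : V}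
    (h : H.Reachable u v) (hu : u ∈ Q) : v ∈ Q := by
  obtain ⟨w⟩ := h
  induction w with
  | nil => exact hu
  | cons hadj _ ih => exact ih (hQ _ _ hadj hu)

lemma ConnectedComponent.supp_eq_of_closed (hQ : ∀ u v, H.Adj u v → u ∈ Q → v ∈ Q)
    (hconn : ∀ u ∈ Q, ∀ v ∈ Q, H.Reachable u v) {u : V} (hu : u ∈ Q) :
    (H.connectedComponentMk u).supp = Q := by
  ext v
  rw [ConnectedComponent.mem_supp_iff, ConnectedComponent.eq]
  exact ⟨fun h => h.symm.mem_of_closed hQ hu, fun hv => hconn v hv u hu⟩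

lemma ncard_image_connectedComponentMk_le_one [Finite V]
    (hconn : ∀ u ∈ Q, ∀ v ∈ Q, H.Reachable u v) :
    (H.connectedComponentMk '' Q).ncard ≤ 1 := by
  rw [Set.ncard_le_one (Set.toFinite _)]
  rintro _ ⟨u, hu, rfl⟩ _ ⟨v, hv, rfl⟩
  exact ConnectedComponent.sound (hconn u hu v hv)

def oddComponentsBelow (H : SimpleGraph V) (n : ℕ) : Set H.ConnectedComponent :=
  {c | Odd (Nat.card c.supp) ∧ Nat.card c.supp < n}

lemma sum_cCount_eq_ncard_oddComponentsBelow [Finite V] (H : SimpleGraph V) (k : ℕ) :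
    ∑ i ∈ Finset.range k, cCount H (2 * i + 1) = (H.oddComponentsBelow (2 * k)).ncard := by
  induction k with
  | zero => simp [oddComponentsBelow]
  | succ k ih =>
    have hsplit : H.oddComponentsBelow (2 * (k + 1)) =
        H.oddComponentsBelow (2 * k) ∪ {c | Nat.card c.supp = 2 * k + 1} := by
      ext c
      simp only [oddComponentsBelow, Set.mem_union, Set.mem_ofPred_eq, Nat.odd_iff]
      omega
    have hdisj : Disjoint (H.oddComponentsBelow (2 * k)) {c | Nat.card c.supp = 2 * k + 1} := by
      rw [Set.disjoint_left]
      intro c hc hc'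
      simp only [oddComponentsBelow, Set.mem_ofPred_eq] at hc hc'
      omega
    rw [Finset.sum_range_succ, ih, hsplit, Set.ncard_union_eq hdisj, cCount]
    rfl

end Components

section DeleteVertices

variable {V : Type*} (G : SimpleGraph V) (X B : Set V) (n : ℕ)

def oddComponentsMeeting : Set (G.induce Xᶜ).ConnectedComponent :=
  (G.induce Xᶜ).oddComponentsBelow n ∩ (G.induce Xᶜ).connectedComponentMk '' (Subtype.val ⁻¹' B)

lemma oddComponentsBelow_subset_union :
    (G.induce Xᶜ).oddComponentsBelow n ⊆
      G.oddComponentsMeeting X B n ∪ G.oddComponentsMeeting X Bᶜ n := by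
  intro c hc
  obtain ⟨u, rfl⟩ := c.exists_rep
  by_cases hu : u.1 ∈ B
  · exact Or.inl ⟨hc, u, hu, rfl⟩
  · exact Or.inr ⟨hc, u, hu, rfl⟩

lemma ncard_oddComponentsMeeting_le_ncard_image [Finite V] :
    (G.oddComponentsMeeting X B n).ncard ≤
      ((G.induce Xᶜ).connectedComponentMk '' (Subtype.val ⁻¹' B)).ncard :=
  Set.ncard_le_ncard Set.inter_subset_right (Set.toFinite _)

lemma ncard_oddComponentsMeeting_le [Finite V] :
    (G.oddComponentsMeeting X B n).ncard ≤ (B \ X).ncard :=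
  (ncard_oddComponentsMeeting_le_ncard_image G X B n).trans <|
    (Set.ncard_image_le (Set.toFinite _)).trans (Set.ncard_preimage_val_compl X B).le

variable {G X B n}

lemma ncard_oddComponentsMeeting_le_one [Finite V]
    (hconn : ∀ u v : ↥Xᶜ, u.1 ∈ B → v.1 ∈ B → (G.induce Xᶜ).Reachable u v) :
    (G.oddComponentsMeeting X B n).ncard ≤ 1 :=
  (ncard_oddComponentsMeeting_le_ncard_image G X B n).trans
    (ncard_image_connectedComponentMk_le_one fun u hu v hv => hconn u v hu hv)

lemma odd_and_lt_of_oddComponentsMeeting_nonempty [Finite V] (hB : ∀ u v, G.Adj u v → u ∈ B → v ∈ B)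
    (hconn : ∀ u v : ↥Xᶜ, u.1 ∈ B → v.1 ∈ B → (G.induce Xᶜ).Reachable u v)
    (hne : (G.oddComponentsMeeting X B n).Nonempty) :
    Odd (B \ X).ncard ∧ (B \ X).ncard < n := by
  obtain ⟨_, hodd, u, hu, rfl⟩ := hne
  have hsupp := ConnectedComponent.supp_eq_of_closed (H := G.induce Xᶜ) (Q := Subtype.val ⁻¹' B)
    (fun v w hvw hv => hB _ _ hvw hv) (fun v hv w hw => hconn v w hv hw) hu
  rwa [oddComponentsBelow, Set.mem_ofPred_eq, hsupp, Nat.card_coe_set_eq,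
    Set.ncard_preimage_val_compl] at hodd

end DeleteVertices

section Paths

variable {V : Type*} [Finite V] {G : SimpleGraph V}

lemma two_mul_le_of_injective_pathGraph_hom {C D : Set V} {n : ℕ}
    (hD : ∀ u ∈ D, ∀ v ∈ D, ∀ w ∈ D, G.Adj u v → G.Adj u w → v = w)
    (φ : pathGraph (n + 1) →g G) (hφ : Function.Injective φ) (hCD : ∀ i, φ i ∈ C ∪ D) :
    2 * n ≤ 4 * C.ncard + D.ncard := by
  set a : Fin n → V := fun i => φ i.castSucc
  set b : Fin n → V := fun i => φ i.succ
  have ha : Function.Injective a := hφ.comp (Fin.castSucc_injective n)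
  have hb : Function.Injective b := hφ.comp (Fin.succ_injective n)
  have hab : ∀ i, G.Adj (a i) (b i) := fun i => φ.map_adj (pathGraph_adj.mpr (Or.inl rfl))
  set ED : Set (Fin n) := {i | a i ∈ D ∧ b i ∈ D}
  have hcover : (Set.univ : Set (Fin n)) ⊆ (a ⁻¹' C ∪ b ⁻¹' C) ∪ ED := by
    intro i _
    have := hCD i.castSucc
    have := hCD i.succ
    simp only [Set.mem_union, Set.mem_preimage, Set.mem_ofPred_eq, ED] at *
    tauto
  -- the edges of the path inside `D` are disjoint, because `G[D]` has maximum degree one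
  have hED : 2 * ED.ncard ≤ D.ncard := by
    have hdisj : Disjoint (a '' ED) (b '' ED) := by
      rw [Set.disjoint_left]
      rintro _ ⟨i, hi, rfl⟩ ⟨i', hi', hbi'⟩
      have h1 : i'.val + 1 = i.val := by simpa [Fin.ext_iff] using hφ hbi'
      have h2 : i'.val = i.val + 1 := by
        have := hD (a i) hi.1 (b i) hi.2 (a i') hi'.1 (hab i) (hbi' ▸ (hab i').symm)
        simpa [Fin.ext_iff] using (hφ this).symm
      omega
    calc 2 * ED.ncard = (a '' ED ∪ b '' ED).ncard := by
          rw [Set.ncard_union_eq hdisj, Set.ncard_image_of_injective _ ha,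
            Set.ncard_image_of_injective _ hb, two_mul]
      _ ≤ D.ncard := Set.ncard_le_ncard (by
          rintro _ (⟨i, hi, rfl⟩ | ⟨i, hi, rfl⟩)
          exacts [hi.1, hi.2]) (Set.toFinite _)
  have hC : ∀ e : Fin n → V, Function.Injective e → (e ⁻¹' C).ncard ≤ C.ncard := fun e he =>
    Set.ncard_le_ncard_of_injOn e (fun _ hi => hi) he.injOn (Set.toFinite _)
  calc 2 * n = 2 * (Set.univ : Set (Fin n)).ncard := by simp
    _ ≤ 2 * ((a ⁻¹' C).ncard + (b ⁻¹' C).ncard + ED.ncard) := by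
        gcongr
        exact (Set.ncard_le_ncard hcover (Set.toFinite _)).trans
          ((Set.ncard_union_le _ _).trans (by gcongr; exact Set.ncard_union_le _ _))
    _ ≤ 4 * C.ncard + D.ncard := by linarith [hC a ha, hC b hb]

theorem not_hasPathFamilyFactor_of_odd_component {n : ℕ} (c : G.ConnectedComponent)
    (hodd : Odd c.supp.ncard)
    (hpath : ∀ φ : pathGraph n →g G, Function.Injective φ → (∀ i, φ i ∈ c.supp) → False) :
    ¬ HasPathFamilyFactor G {2, n} := by
  rintro ⟨F, hFG, hF⟩
  have hempty : {d ∈ F.oddComponents | d.supp ⊆ c.supp} = ∅ := by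
    refine Set.eq_empty_of_forall_notMem fun d ⟨hdodd, hdc⟩ => ?_
    obtain ⟨m, hm, ⟨ψ⟩⟩ := hF d
    have hcard : d.supp.ncard = m := by
      rw [← Nat.card_coe_set_eq, Nat.card_congr ψ.toEquiv, Nat.card_fin]
    rcases hm with rfl | rfl
    · exact Nat.not_odd_iff_even.mpr even_two (hcard ▸ hdodd)
    · exact hpath ⟨fun i => (ψ.symm i).1, fun h => hFG (ψ.symm.map_adj_iff.mpr h)⟩
        (Subtype.val_injective.comp ψ.symm.injective) fun i => hdc (ψ.symm i).2
  have := (ConnectedComponent.odd_oddComponents_ncard_subset_supp F hFG c).mpr hodd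
  rw [hempty, Set.ncard_empty] at this
  exact Nat.not_odd_zero this

end Paths

end SimpleGraph

open SimpleGraph

/-- The join of the `p` disjoint edges `{2i, 2i+1}` with an independent set of `c` vertices,
together with a disjoint clique on the last `f` vertices. -/
def matchingJoinGraph (p c f : ℕ) : SimpleGraph (Fin (2 * p + c + f)) :=
  SimpleGraph.fromRel fun a b =>
    (a.val < 2 * p ∧ b.val < 2 * p ∧ a.val / 2 = b.val / 2) ∨
    (a.val < 2 * p ∧ 2 * p ≤ b.val ∧ b.val < 2 * p + c) ∨
    (2 * p + c ≤ a.val ∧ 2 * p + c ≤ b.val)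

namespace MatchingJoinGraph

variable {p c f : ℕ}

def pairs : Set (Fin (2 * p + c + f)) := {a | a.val < 2 * p}

def center : Set (Fin (2 * p + c + f)) := {a | 2 * p ≤ a.val ∧ a.val < 2 * p + c}

def core : Set (Fin (2 * p + c + f)) := {a | a.val < 2 * p + c}

def stranded (X : Set (Fin (2 * p + c + f))) : Set (Fin (2 * p + c + f)) :=
  {a | a.val < 2 * p ∧ a ∉ X ∧ ∀ b : Fin (2 * p + c + f), b.val / 2 = a.val / 2 → b ≠ a → b ∈ X}

lemma adj_iff {a b : Fin (2 * p + c + f)} :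
    (matchingJoinGraph p c f).Adj a b ↔ a.val ≠ b.val ∧
      ((a.val < 2 * p ∧ b.val < 2 * p ∧ a.val / 2 = b.val / 2) ∨
        (a.val < 2 * p ∧ 2 * p ≤ b.val ∧ b.val < 2 * p + c) ∨
        (b.val < 2 * p ∧ 2 * p ≤ a.val ∧ a.val < 2 * p + c) ∨
        (2 * p + c ≤ a.val ∧ 2 * p + c ≤ b.val)) := by
  rw [matchingJoinGraph, SimpleGraph.fromRel_adj, Fin.val_ne_iff]
  omega

lemma core_closed {a b : Fin (2 * p + c + f)} (h : (matchingJoinGraph p c f).Adj a b)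
    (ha : a ∈ core) : b ∈ core := by
  simp only [core, Set.mem_ofPred_eq] at *
  rw [adj_iff] at h
  omega

lemma compl_core_closed {a b : Fin (2 * p + c + f)} (h : (matchingJoinGraph p c f).Adj a b)
    (ha : a ∈ coreᶜ) : b ∈ coreᶜ := fun hb => ha (core_closed h.symm hb)

lemma pairs_subset_core : (pairs : Set (Fin (2 * p + c + f))) ⊆ core := fun a ha => by
  simp only [pairs, core, Set.mem_ofPred_eq] at *
  omega

lemma center_subset_core : (center : Set (Fin (2 * p + c + f))) ⊆ core := fun a ha => by
  simp only [center, core, Set.mem_ofPred_eq] at *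
  omega

lemma ncard_pairs : (pairs : Set (Fin (2 * p + c + f))).ncard = 2 * p := by
  rw [pairs, ← Fin.range_castLE (by omega), Set.ncard_range_of_injective (Fin.castLE_injective _),
    Nat.card_fin]

lemma ncard_core : (core : Set (Fin (2 * p + c + f))).ncard = 2 * p + c := by
  rw [core, ← Fin.range_castLE (by omega), Set.ncard_range_of_injective (Fin.castLE_injective _),
    Nat.card_fin]

lemma ncard_center : (center : Set (Fin (2 * p + c + f))).ncard = c := by
  have h : (center : Set (Fin (2 * p + c + f))) = core \ pairs := by
    ext a
    simp only [center, core, pairs, Set.mem_sdiff, Set.mem_ofPred_eq]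
    omega
  rw [h, Set.ncard_sdiff pairs_subset_core, ncard_core, ncard_pairs]
  omega

lemma ncard_compl_core : (coreᶜ : Set (Fin (2 * p + c + f))).ncard = f := by
  rw [Set.ncard_compl, ncard_core, Nat.card_fin]
  omega

lemma reachable_of_mem_core {X : Set (Fin (2 * p + c + f))} {z w : ↥Xᶜ} (hz : z.1 ∈ center)
    (hw : w.1 ∈ pairs) {u v : ↥Xᶜ} (hu : u.1 ∈ core) (hv : v.1 ∈ core) :
    ((matchingJoinGraph p c f).induce Xᶜ).Reachable u v := by
  simp only [center, pairs, core, Set.mem_ofPred_eq] at hz hw hu hv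
  have hwz : ((matchingJoinGraph p c f).induce Xᶜ).Adj w z := by
    rw [induce_adj, adj_iff]
    omega
  have hreach : ∀ x : ↥Xᶜ, x.1.val < 2 * p + c →
      ((matchingJoinGraph p c f).induce Xᶜ).Reachable x z := by
    intro x hx
    by_cases hxp : x.1.val < 2 * p
    · exact Adj.reachable (by rw [induce_adj, adj_iff]; omega)
    · exact (Adj.reachable (by rw [induce_adj, adj_iff]; omega :
        ((matchingJoinGraph p c f).induce Xᶜ).Adj x w)).trans hwz.reachable
  exact (hreach u hu).trans (hreach v hv).symm

lemma le_of_injective_pathGraph_hom {n : ℕ} (φ : pathGraph (n + 1) →g matchingJoinGraph p c f)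
    (hφ : Function.Injective φ) (hcore : ∀ i, φ i ∈ core) : n ≤ 2 * c + p := by
  have hCD : ∀ i, φ i ∈ center ∪ pairs := fun i => by
    have := hcore i
    simp only [center, pairs, core, Set.mem_union, Set.mem_ofPred_eq] at *
    omega
  have hD : ∀ u ∈ (pairs : Set (Fin (2 * p + c + f))), ∀ v ∈ pairs, ∀ w ∈ pairs,
      (matchingJoinGraph p c f).Adj u v → (matchingJoinGraph p c f).Adj u w → v = w := by
    intro u _ v hv w hw huv huw
    simp only [pairs, Set.mem_ofPred_eq, adj_iff] at *
    exact Fin.ext (by omega)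
  have := two_mul_le_of_injective_pathGraph_hom hD φ hφ hCD
  rw [ncard_center, ncard_pairs] at this
  omega

theorem not_hasPathFamilyFactor {n : ℕ} (hp : 0 < p) (hc : Odd c) (hn : 2 * c + p < n) :
    ¬ HasPathFamilyFactor (matchingJoinGraph p c f) {2, n + 1} := by
  have hc0 : 0 < c := hc.pos
  set z : Fin (2 * p + c + f) := ⟨2 * p, by omega⟩
  have hsupp : ((matchingJoinGraph p c f).connectedComponentMk z).supp = core := by
    refine ConnectedComponent.supp_eq_of_closed (fun _ _ h ha => core_closed h ha)
      (fun u hu v hv => ?_) (by simp [core, z]; omega)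
    exact (reachable_of_mem_core (X := ∅) (z := ⟨z, id⟩) (w := ⟨⟨0, by omega⟩, id⟩)
      (u := ⟨u, id⟩) (v := ⟨v, id⟩) (by simp [center, z]; omega) (by simp [pairs]; omega)
      hu hv).map (Embedding.induce _).toHom
  refine not_hasPathFamilyFactor_of_odd_component (connectedComponentMk _ z) ?_
    fun φ hφ hcore => ?_
  · rw [hsupp, ncard_core]
    exact Even.add_odd (even_two_mul p) hc
  · have := le_of_injective_pathGraph_hom φ hφ (hsupp ▸ hcore)
    omega

lemma three_mul_ncard_oddComponentsMeeting_compl_core_le {n : ℕ} (hf : n + 2 ≤ f)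
    (X : Set (Fin (2 * p + c + f))) :
    3 * ((matchingJoinGraph p c f).oddComponentsMeeting X coreᶜ n).ncard ≤ (X \ core).ncard := by
  have hconn : ∀ u v : ↥Xᶜ, u.1 ∈ coreᶜ → v.1 ∈ coreᶜ →
      ((matchingJoinGraph p c f).induce Xᶜ).Reachable u v := by
    intro u v hu hv
    by_cases huv : u = v
    · exact huv ▸ Reachable.refl u
    · refine Adj.reachable ?_
      have : u.1.val ≠ v.1.val := fun h => huv (Subtype.ext (Fin.ext h))
      simp only [core, Set.mem_compl_iff, Set.mem_ofPred_eq] at hu hv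
      rw [induce_adj, adj_iff]
      omega
  rcases Nat.eq_zero_or_pos ((matchingJoinGraph p c f).oddComponentsMeeting X coreᶜ n).ncard
    with h0 | hpos
  · rw [h0]
    omega
  obtain ⟨⟨m, hm⟩, hlt⟩ := odd_and_lt_of_oddComponentsMeeting_nonempty
    (fun _ _ h ha => compl_core_closed h ha) hconn (Set.nonempty_of_ncard_ne_zero hpos.ne')
  have hsplit := Set.ncard_inter_add_ncard_sdiff_eq_ncard (coreᶜ : Set (Fin (2 * p + c + f))) X
  rw [ncard_compl_core, Set.inter_comm, ← Set.sdiff_eq] at hsplit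
  have := ncard_oddComponentsMeeting_le_one (n := n) hconn
  omega

-- A surviving matching vertex whose partner also survives lies in a component of order `2`.
lemma mem_stranded_of_odd {X : Set (Fin (2 * p + c + f))} (hX : center ⊆ X) {u : ↥Xᶜ}
    (hu : u.1 ∈ core)
    (hodd : Odd (Nat.card (((matchingJoinGraph p c f).induce Xᶜ).connectedComponentMk u).supp)) :
    u.1 ∈ stranded X := by
  have hup : u.1.val < 2 * p := by
    have hu' : u.1 ∉ center := fun h => u.2 (hX h)
    simp only [core, center, Set.mem_ofPred_eq] at hu hu'
    omega
  refine ⟨hup, u.2, fun b hb hbu => ?_⟩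
  by_contra hbX
  set w : ↥Xᶜ := ⟨b, hbX⟩
  have hbu' : b.val ≠ u.1.val := fun h => hbu (Fin.ext h)
  have hmem : ∀ x : ↥Xᶜ, x ∈ ({u, w} : Set ↥Xᶜ) ↔ x.1.val < 2 * p ∧ x.1.val / 2 = u.1.val / 2 := by
    intro x
    simp only [Set.mem_insert_iff, Set.mem_singleton_iff, Subtype.ext_iff, Fin.ext_iff, w]
    omega
  have hsupp := ConnectedComponent.supp_eq_of_closed (H := (matchingJoinGraph p c f).induce Xᶜ)
    (Q := {u, w}) (fun x y hxy hx => by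
      have hy : y.1 ∉ center := fun h => y.2 (hX h)
      rw [hmem] at hx ⊢
      rw [induce_adj, adj_iff] at hxy
      simp only [center, Set.mem_ofPred_eq] at hy
      omega)
    (fun x hx y hy => by
      by_cases hxy : x = y
      · exact hxy ▸ Reachable.refl x
      · have hxy' : x.1.val ≠ y.1.val := fun h => hxy (Subtype.ext (Fin.ext h))
        rw [hmem] at hx hy
        exact Adj.reachable (by rw [induce_adj, adj_iff]; omega))
    (Set.mem_insert u _)
  have huw : u ≠ w := fun h => hbu' (congrArg (fun x : ↥Xᶜ => x.1.val) h).symm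
  rw [hsupp, Nat.card_coe_set_eq, Set.ncard_pair huw] at hodd
  exact Nat.not_odd_iff_even.mpr even_two hodd

lemma ncard_stranded_le (X : Set (Fin (2 * p + c + f))) :
    (stranded X).ncard ≤ (X ∩ pairs).ncard := by
  let partner : Fin (2 * p + c + f) → Fin (2 * p + c + f) := fun a =>
    if h : a.val < 2 * p then ⟨a.val + 1 - 2 * (a.val % 2), by omega⟩ else a
  have hpartner : ∀ a : Fin (2 * p + c + f), a.val < 2 * p →
      (partner a).val = a.val + 1 - 2 * (a.val % 2) := fun a ha => by
    simp only [partner, dif_pos ha]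
  refine Set.ncard_le_ncard_of_injOn partner (fun a ⟨ha, _, haX⟩ => ⟨haX _ ?_ ?_, ?_⟩)
    (fun a ⟨ha, _⟩ a' ⟨ha', _⟩ h => ?_) (Set.toFinite _)
  · rw [hpartner a ha]
    omega
  · intro h
    have := congrArg Fin.val h
    rw [hpartner a ha] at this
    omega
  · show (partner a).val < 2 * p
    rw [hpartner a ha]
    omega
  · have := congrArg Fin.val h
    rw [hpartner a ha, hpartner a' ha'] at this
    exact Fin.ext (by omega)

lemma ncard_oddComponentsMeeting_core_le_of_center_subset {n : ℕ}
    {X : Set (Fin (2 * p + c + f))} (hX : center ⊆ X) :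
    ((matchingJoinGraph p c f).oddComponentsMeeting X core n).ncard ≤ (stranded X).ncard := by
  have hsub : (matchingJoinGraph p c f).oddComponentsMeeting X core n ⊆
      ((matchingJoinGraph p c f).induce Xᶜ).connectedComponentMk '' (Subtype.val ⁻¹' stranded X) :=
    fun _ ⟨hodd, u, hu, hcu⟩ => ⟨u, mem_stranded_of_odd hX hu (hcu ▸ hodd.1), hcu⟩
  calc _ ≤ _ := Set.ncard_le_ncard hsub (Set.toFinite _)
    _ ≤ _ := Set.ncard_image_le (Set.toFinite _)
    _ = (stranded X \ X).ncard := Set.ncard_preimage_val_compl X _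
    _ ≤ (stranded X).ncard := Set.ncard_le_ncard Set.sdiff_subset (Set.toFinite _)

-- Equality holds for `X = center ∪ {a | a.val < 2 * p ∧ Even a.val}`, which fixes the constants.
lemma ncard_oddComponentsMeeting_core_le (i : ℕ)
    (X : Set (Fin (2 * (2 * i + 3) + (2 * i + 1) + f))) :
    (24 * i + 27) * ((matchingJoinGraph (2 * i + 3) (2 * i + 1) f).oddComponentsMeeting X core
        (6 * i + 6)).ncard
      ≤ (12 * i + 18) * (X ∩ core).ncard + (6 * i + 9) := by
  set T := ((matchingJoinGraph (2 * i + 3) (2 * i + 1) f).oddComponentsMeeting X core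
    (6 * i + 6)).ncard
  have hcore := Set.ncard_inter_add_ncard_sdiff_eq_ncard
    (core : Set (Fin (2 * (2 * i + 3) + (2 * i + 1) + f))) X
  rw [ncard_core, Set.inter_comm] at hcore
  by_cases hC : center ⊆ X
  · have hT := ncard_oddComponentsMeeting_core_le_of_center_subset (n := 6 * i + 6) hC
    have hpairs := Set.ncard_inter_add_ncard_sdiff_eq_ncard
      (pairs : Set (Fin (2 * (2 * i + 3) + (2 * i + 1) + f))) X
    rw [ncard_pairs, Set.inter_comm] at hpairs
    have hT₁ := ncard_stranded_le X
    have hT₂ : (stranded X).ncard ≤ (pairs \ X).ncard :=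
      Set.ncard_le_ncard (fun a ha => ⟨ha.1, ha.2.1⟩) (Set.toFinite _)
    have hdisj : Disjoint (center : Set (Fin (2 * (2 * i + 3) + (2 * i + 1) + f))) (X ∩ pairs) :=
      Set.disjoint_left.mpr fun a ha hb => by
        simp only [center, pairs, Set.mem_inter_iff, Set.mem_ofPred_eq] at ha hb
        omega
    have hX : 2 * i + 1 + (X ∩ pairs).ncard ≤ (X ∩ core).ncard :=
      calc 2 * i + 1 + (X ∩ pairs).ncard = (center ∪ X ∩ pairs).ncard := by
            rw [Set.ncard_union_eq hdisj, ncard_center]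
        _ ≤ (X ∩ core).ncard := Set.ncard_le_ncard (Set.union_subset
            (fun a ha => ⟨hC ha, center_subset_core ha⟩)
            (Set.inter_subset_inter_right X pairs_subset_core)) (Set.toFinite _)
    nlinarith
  by_cases hP : pairs ⊆ X
  · have hT := ncard_oddComponentsMeeting_le (matchingJoinGraph (2 * i + 3) (2 * i + 1) f) X core
      (6 * i + 6)
    have hX : 4 * i + 6 ≤ (X ∩ core).ncard :=
      calc 4 * i + 6 = (pairs : Set (Fin (2 * (2 * i + 3) + (2 * i + 1) + f))).ncard := by
            rw [ncard_pairs]; ring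
        _ ≤ (X ∩ core).ncard :=
            Set.ncard_le_ncard (Set.subset_inter hP pairs_subset_core) (Set.toFinite _)
    nlinarith
  obtain ⟨z, hzC, hzX⟩ := Set.not_subset.mp hC
  obtain ⟨w, hwP, hwX⟩ := Set.not_subset.mp hP
  have hconn : ∀ u v : ↥Xᶜ, u.1 ∈ core → v.1 ∈ core →
      ((matchingJoinGraph (2 * i + 3) (2 * i + 1) f).induce Xᶜ).Reachable u v :=
    fun u v hu hv => reachable_of_mem_core (z := ⟨z, hzX⟩) (w := ⟨w, hwX⟩) hzC hwP hu hv
  have hT := ncard_oddComponentsMeeting_le_one (n := 6 * i + 6) hconn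
  rcases Nat.eq_zero_or_pos T with h0 | hpos
  · rw [h0]
    omega
  obtain ⟨⟨m, hm⟩, hlt⟩ := odd_and_lt_of_oddComponentsMeeting_nonempty
    (fun _ _ h ha => core_closed h ha) hconn (Set.nonempty_of_ncard_ne_zero hpos.ne')
  have hX : 2 ≤ (X ∩ core).ncard := by omega
  nlinarith

lemma ncard_oddComponentsBelow_le (i : ℕ) (hf : 6 * i + 8 ≤ f)
    (X : Set (Fin (2 * (2 * i + 3) + (2 * i + 1) + f))) :
    (24 * i + 27) *
        (((matchingJoinGraph (2 * i + 3) (2 * i + 1) f).induce Xᶜ).oddComponentsBelow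
          (6 * i + 6)).ncard
      ≤ (12 * i + 18) * X.ncard + (6 * i + 9) := by
  have hsplit := (Set.ncard_le_ncard
    (oddComponentsBelow_subset_union (matchingJoinGraph (2 * i + 3) (2 * i + 1) f) X core
      (6 * i + 6)) (Set.toFinite _)).trans (Set.ncard_union_le _ _)
  have hcore := ncard_oddComponentsMeeting_core_le i X
  have hclique :=
    three_mul_ncard_oddComponentsMeeting_compl_core_le (by omega : 6 * i + 6 + 2 ≤ f) X
  have hX := Set.ncard_inter_add_ncard_sdiff_eq_ncard X core
  nlinarith

end MatchingJoinGraph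

/-- for every `k ≥ 3` divisible by `3` there are infinitely many graphs
without a `{P₂, P_{2k+1}}`-factor satisfying the odd-component counting inequality. -/
theorem stmt18 (k : ℕ) (hk3 : 3 ≤ k) (hkmod : k % 3 = 0) :
    ∀ N : ℕ, ∃ m, N ≤ m ∧ ∃ G : SimpleGraph (Fin m),
      ¬ HasPathFamilyFactor G {2, 2 * k + 1} ∧
      ∀ X : Set (Fin m),
        (∑ i ∈ Finset.range k, (cCount (SimpleGraph.induce Xᶜ G) (2 * i + 1) : ℚ)) ≤
          ((4 * k + 6) / (8 * k + 3)) * X.ncard + (2 * k + 3) / (8 * k + 3) := by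
  intro N
  obtain ⟨i, rfl⟩ : ∃ i, k = 3 * i + 3 := ⟨k / 3 - 1, by omega⟩
  refine ⟨_, by omega, matchingJoinGraph (2 * i + 3) (2 * i + 1) (6 * i + 8 + N),
    MatchingJoinGraph.not_hasPathFamilyFactor (by omega) (odd_two_mul_add_one i) (by omega),
    fun X => ?_⟩
  have hT := (Nat.cast_le (α := ℚ)).mpr (MatchingJoinGraph.ncard_oddComponentsBelow_le i
    (by omega) X)
  push_cast at hT
  rw [← Nat.cast_sum, sum_cCount_eq_ncard_oddComponentsBelow, div_mul_eq_mul_div, ← add_div,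
    le_div_iff₀ (by positivity), show 2 * (3 * i + 3) = 6 * i + 6 by ring]
  push_cast
  linarith
end
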